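/- arXiv:2310.02723 — 6 statements merged into one kernel-verified Lean document; each statement's English description precedes it below -/
import Mathlib

section
/- Let m ∈ ℕ. Then: (i) for every f(z) = ∑_{n≥m} a_n zⁿ analytic on 𝔻 with ‖f‖_∞ ≤ 1 and every 0 ≤ r ≤ 1 − (2/3)^{1/(m+1)}, one has (1/m!) ∑_{n≥m} n(n−1)⋯(n−m+1) |a_n| r^{n−m} ≤ 1 (i.e. ∑_{n≥m} C(n,m) |a_n| r^{n−m} ≤ 1); (ii) for every r with 1 − (2/3)^{1/(m+1)} < r < 1 there exists f(z) = ∑_{n≥m} a_n zⁿ analytic on 𝔻 with ‖f‖_∞ ≤ 1 and ∑_{n≥m} C(n,m) |a_n| r^{n−m} > 1. Thus the Bohr radius of the pair (identity on functions vanishing to order m, the normalized m-th derivative ∂^m/m!) equals 1 − (2/3)^{1/(m+1)}. -/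
/-!
Write `f = z ^ m * g`; by the maximum modulus principle `‖g‖ ≤ 1` on the disc. Averaging `g` over
the `n`-th roots of unity leaves a bounded function of `z ^ n` whose Taylor coefficients are
`b 0, b n, b (2 * n), …`, so the Schwarz–Pick estimate `‖h' 0‖ ≤ 1 - ‖h 0‖ ^ 2` yields Wiener's
inequality `‖b n‖ ≤ 1 - ‖b 0‖ ^ 2` for the coefficients of `g`. With `t = ‖b 0‖` the majorant
series is then at most `t + (1 - t ^ 2) * ((1 - r) ^ (-(m + 1)) - 1)`, hence at most
`t + (1 - t ^ 2) / 2 ≤ 1` as soon as `(1 - r) ^ (m + 1) ≥ 2 / 3`. Conversely, for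
`f = z ^ m * (t - z) / (1 - t * z)` the majorant series is
`t + (1 - t ^ 2) / t * ((1 - t * r) ^ (-(m + 1)) - 1)`, which exceeds `1` for `t` close to `1`
once `(1 - r) ^ (m + 1) < 2 / 3`.
-/

open Metric Filter Set FormalMultilinearSeries Topology

theorem hasFPowerSeriesOnBall_tsum_of_summable {B : ℕ → ℂ}
    (h : ∀ z ∈ ball (0 : ℂ) 1, Summable fun n => B n * z ^ n) :
    HasFPowerSeriesOnBall (fun z => ∑' n, B n * z ^ n) (ofScalars ℂ B) 0 1 := by
  have hrad : 1 ≤ (ofScalars ℂ B).radius := by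
    refine ENNReal.le_of_forall_nnreal_lt fun x hx => ?_
    have hx' : (x : ℂ) ∈ ball (0 : ℂ) 1 := by simpa using hx
    refine (ofScalars ℂ B).le_radius_of_tendsto (l := 0) ?_
    simpa [ofScalars_norm] using (h _ hx').tendsto_atTop_zero.norm
  convert ((ofScalars ℂ B).hasFPowerSeriesOnBall (one_pos.trans_le hrad)).mono one_pos hrad
  simp [FormalMultilinearSeries.sum, mul_comm]

theorem differentiableOn_tsum_of_summable {B : ℕ → ℂ}
    (h : ∀ z ∈ ball (0 : ℂ) 1, Summable fun n => B n * z ^ n) :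
    DifferentiableOn ℂ (fun z => ∑' n, B n * z ^ n) (ball 0 1) := by
  simpa [← ENNReal.coe_one, eball_coe] using
    (hasFPowerSeriesOnBall_tsum_of_summable h).differentiableOn

theorem norm_sub_le_norm_one_sub_conj_mul {a w : ℂ} (ha : ‖a‖ ≤ 1) (hw : ‖w‖ ≤ 1) :
    ‖a - w‖ ≤ ‖1 - (starRingEnd ℂ) a * w‖ := by
  have key : Complex.normSq (1 - (starRingEnd ℂ) a * w) - Complex.normSq (a - w)
      = (1 - Complex.normSq a) * (1 - Complex.normSq w) := by
    simp only [Complex.normSq_apply, Complex.sub_re, Complex.sub_im, Complex.mul_re,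
      Complex.mul_im, Complex.one_re, Complex.one_im, Complex.conj_re, Complex.conj_im]
    ring
  have ha2 : Complex.normSq a ≤ 1 := by
    rw [Complex.normSq_eq_norm_sq]; exact pow_le_one₀ (norm_nonneg a) ha
  have hw2 : Complex.normSq w ≤ 1 := by
    rw [Complex.normSq_eq_norm_sq]; exact pow_le_one₀ (norm_nonneg w) hw
  rw [Complex.norm_def, Complex.norm_def]
  exact Real.sqrt_le_sqrt (by nlinarith)

theorem deriv_zero_eq_zero_of_norm_eq_one {g : ℂ → ℂ} (hd : DifferentiableOn ℂ g (ball 0 1))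
    (hb : ∀ z ∈ ball (0 : ℂ) 1, ‖g z‖ ≤ 1) (h1 : ‖g 0‖ = 1) : deriv g 0 = 0 := by
  have h0 : (0 : ℂ) ∈ ball (0 : ℂ) 1 := mem_ball_self one_pos
  have hconst : g =ᶠ[𝓝 0] fun _ => g 0 :=
    eventually_of_mem (isOpen_ball.mem_nhds h0) fun z hz =>
      Complex.eqOn_of_isPreconnected_of_isMaxOn_norm (convex_ball 0 1).isPreconnected
        isOpen_ball hd h0 (fun w hw => by simpa [h1] using hb w hw) hz
  rw [hconst.deriv_eq, deriv_const]

theorem norm_deriv_zero_le_one_sub_sq {g : ℂ → ℂ} (hd : DifferentiableOn ℂ g (ball 0 1))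
    (hb : ∀ z ∈ ball (0 : ℂ) 1, ‖g z‖ ≤ 1) : ‖deriv g 0‖ ≤ 1 - ‖g 0‖ ^ 2 := by
  have h0 : (0 : ℂ) ∈ ball (0 : ℂ) 1 := mem_ball_self one_pos
  set a := g 0
  rcases (hb 0 h0).lt_or_eq with ha | ha
  · have hden : ∀ z ∈ ball (0 : ℂ) 1, 1 - (starRingEnd ℂ) a * g z ≠ 0 := by
      intro z hz
      refine sub_ne_zero.2 (ne_of_apply_ne norm fun h => ?_)
      rw [norm_one, norm_mul, RCLike.norm_conj] at h
      linarith [mul_lt_one_of_nonneg_of_lt_one_left (norm_nonneg a) ha (hb z hz)]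
    set ω : ℂ → ℂ := fun z => (a - g z) / (1 - (starRingEnd ℂ) a * g z)
    have hωd : DifferentiableOn ℂ ω (ball 0 1) :=
      ((differentiableOn_const a).sub hd).div ((differentiableOn_const 1).sub
        ((differentiableOn_const _).mul hd)) hden
    have hωb : MapsTo ω (ball 0 1) (closedBall (ω 0) 1) := by
      intro z hz
      rw [show ω 0 = 0 by simp [ω, a], mem_closedBall_zero_iff, norm_div]
      exact div_le_one_of_le₀ (norm_sub_le_norm_one_sub_conj_mul ha.le (hb z hz)) (norm_nonneg _)
    have hg : HasDerivAt g (deriv g 0) 0 :=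
      (hd.differentiableAt (isOpen_ball.mem_nhds h0)).hasDerivAt
    have hω : deriv ω 0 = -deriv g 0 / (1 - ‖a‖ ^ 2 : ℝ) := by
      have hconj : (starRingEnd ℂ) a * a = ((‖a‖ ^ 2 : ℝ) : ℂ) := by
        rw [mul_comm, Complex.mul_conj, Complex.normSq_eq_norm_sq]
      have hω' : HasDerivAt ω ((-deriv g 0 * (1 - (starRingEnd ℂ) a * a)
          - (a - a) * -((starRingEnd ℂ) a * deriv g 0)) / (1 - (starRingEnd ℂ) a * a) ^ 2) 0 :=
        (hg.const_sub a).div ((hg.const_mul _).const_sub 1) (hden 0 h0)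
      have hne : (1 : ℂ) - ((‖a‖ ^ 2 : ℝ) : ℂ) ≠ 0 := by
        rw [← hconj]; exact hden 0 h0
      rw [hω'.deriv, hconj, sub_self, zero_mul, sub_zero]
      push_cast at hne ⊢
      field_simp
    have := Complex.norm_deriv_le_one_of_mapsTo_ball hωd hωb one_pos
    rw [hω, norm_div, norm_neg, Complex.norm_real, Real.norm_of_nonneg, div_le_one] at this
    · exact this
    all_goals nlinarith [norm_nonneg a]
  · rw [deriv_zero_eq_zero_of_norm_eq_one hd hb ha, norm_zero, ha]
    norm_num

theorem IsPrimitiveRoot.geom_sum_pow {K : Type*} [Field K] {ζ : K} {n : ℕ}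
    (hζ : IsPrimitiveRoot ζ n) (k : ℕ) :
    ∑ j ∈ Finset.range n, (ζ ^ k) ^ j = if n ∣ k then (n : K) else 0 := by
  split_ifs with hk
  · simp [(hζ.pow_eq_one_iff_dvd k).2 hk]
  · have hne : ζ ^ k ≠ 1 := mt (hζ.pow_eq_one_iff_dvd k).1 hk
    rw [geom_sum_eq hne, ← pow_mul, mul_comm, pow_mul, hζ.pow_eq_one, one_pow, sub_self,
      zero_div]

theorem hasSum_sum_rootOfUnity_mul {K : Type*} [Field K] [TopologicalSpace K] [ContinuousAdd K]
    {B s : ℕ → K} {ζ z : K} {n : ℕ} (hζ : IsPrimitiveRoot ζ n) (hn : n ≠ 0)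
    (h : ∀ j, HasSum (fun k => B k * (ζ ^ j * z) ^ k) (s j)) :
    HasSum (fun k => n * (B (k * n) * (z ^ n) ^ k)) (∑ j ∈ Finset.range n, s j) := by
  have hsum := hasSum_sum (s := Finset.range n) fun j _ => h j
  have hterm : ∀ k, ∑ j ∈ Finset.range n, B k * (ζ ^ j * z) ^ k
      = if n ∣ k then n * (B k * z ^ k) else 0 := by
    intro k
    have hj : ∀ j, B k * (ζ ^ j * z) ^ k = B k * z ^ k * (ζ ^ k) ^ j := fun j => by
      rw [mul_pow, ← pow_mul, ← pow_mul, mul_comm j k]; ring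
    simp_rw [hj, ← Finset.mul_sum, hζ.geom_sum_pow k]
    split_ifs <;> ring
  simp_rw [hterm] at hsum
  have hinj : Function.Injective fun k => k * n := fun a b hab => Nat.eq_of_mul_eq_mul_right
    (Nat.pos_of_ne_zero hn) hab
  refine ((hinj.hasSum_iff fun k hk => if_neg fun ⟨c, hc⟩ => hk ⟨c, by simp [hc, mul_comm]⟩).2
    hsum).congr_fun fun k => ?_
  simp [pow_mul, mul_comm]

theorem norm_coeff_le_one_sub_sq {B : ℕ → ℂ} {G : ℂ → ℂ}
    (hG : ∀ z ∈ ball (0 : ℂ) 1, HasSum (fun k => B k * z ^ k) (G z))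
    (hb : ∀ z ∈ ball (0 : ℂ) 1, ‖G z‖ ≤ 1) {n : ℕ} (hn : n ≠ 0) :
    ‖B n‖ ≤ 1 - ‖B 0‖ ^ 2 := by
  have hζ := Complex.isPrimitiveRoot_exp n hn
  set ζ := Complex.exp (2 * Real.pi * Complex.I / n)
  have hH : ∀ w ∈ ball (0 : ℂ) 1, ∃ s, HasSum (fun k => B (k * n) * w ^ k) s ∧ ‖s‖ ≤ 1 := by
    intro w hw
    obtain ⟨z, rfl⟩ := IsAlgClosed.exists_pow_nat_eq w (Nat.pos_of_ne_zero hn)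
    rw [mem_ball_zero_iff, norm_pow, pow_lt_one_iff_of_nonneg (norm_nonneg z) hn] at hw
    have hζz : ∀ j : ℕ, ζ ^ j * z ∈ ball (0 : ℂ) 1 := fun j => by
      simpa [hζ.norm'_eq_one hn] using hw
    refine ⟨(n : ℂ)⁻¹ * ∑ j ∈ Finset.range n, G (ζ ^ j * z), ?_, ?_⟩
    · simpa [← mul_assoc, hn] using
        (hasSum_sum_rootOfUnity_mul hζ hn fun j => hG _ (hζz j)).mul_left (n : ℂ)⁻¹
    · calc ‖(n : ℂ)⁻¹ * ∑ j ∈ Finset.range n, G (ζ ^ j * z)‖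
          ≤ (n : ℝ)⁻¹ * ∑ _j ∈ Finset.range n, (1 : ℝ) := by
            rw [norm_mul, norm_inv, Complex.norm_natCast]
            gcongr
            exact (norm_sum_le _ _).trans (Finset.sum_le_sum fun j _ => hb _ (hζz j))
        _ = 1 := by simp [hn]
  choose s hs hs1 using hH
  have hp := hasFPowerSeriesOnBall_tsum_of_summable fun w hw => (hs w hw).summable
  have hSP := norm_deriv_zero_le_one_sub_sq
    (differentiableOn_tsum_of_summable fun w hw => (hs w hw).summable)
    fun w hw => (hs w hw).tsum_eq ▸ hs1 w hw
  rw [hp.hasFPowerSeriesAt.deriv, tsum_eq_single 0 fun k hk => by simp [hk]] at hSP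
  simpa using hSP

theorem norm_le_one_of_norm_pow_mul_le_one {g : ℂ → ℂ} {m : ℕ}
    (hd : DifferentiableOn ℂ g (ball 0 1)) (hb : ∀ z ∈ ball (0 : ℂ) 1, ‖z ^ m * g z‖ ≤ 1) :
    ∀ z ∈ ball (0 : ℂ) 1, ‖g z‖ ≤ 1 := by
  intro z hz
  rw [mem_ball_zero_iff] at hz
  have key : ∀ ρ ∈ Ioo ‖z‖ 1, ‖g z‖ ≤ (ρ ^ m)⁻¹ := by
    rintro ρ ⟨hzρ, hρ1⟩
    have hρ : 0 < ρ := (norm_nonneg z).trans_lt hzρ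
    refine Complex.norm_le_of_forall_mem_frontier_norm_le isBounded_ball
      (DifferentiableOn.diffContOnCl ?_) (fun w hw => ?_) (subset_closure (mem_ball_zero_iff.2 hzρ))
    · rw [closure_ball 0 hρ.ne']
      exact hd.mono (closedBall_subset_ball hρ1)
    · rw [frontier_ball 0 hρ.ne', mem_sphere_zero_iff_norm] at hw
      have := hb w (mem_ball_zero_iff.2 (hw.trans_lt hρ1))
      rw [norm_mul, norm_pow, hw] at this
      rw [← one_div, le_div_iff₀ (by positivity)]
      linarith
  have hlim : Tendsto (fun ρ : ℝ => (ρ ^ m)⁻¹) (𝓝[<] 1) (𝓝 1) := by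
    have hc : ContinuousAt (fun ρ : ℝ => (ρ ^ m)⁻¹) 1 := by fun_prop (disch := simp)
    simpa using hc.tendsto.mono_left nhdsWithin_le_nhds
  exact ge_of_tendsto hlim (eventually_of_mem (Ioo_mem_nhdsLT hz) key)

theorem summable_shift_of_summable {K : Type*} [NormedField K] {A : ℕ → K} {z : K} (m : ℕ)
    (h : Summable fun n => A n * z ^ n) : Summable fun k => A (k + m) * z ^ k := by
  rcases eq_or_ne z 0 with rfl | hz
  · exact (hasSum_single 0 fun k hk => by simp [hk]).summable
  · refine (((summable_nat_add_iff m).2 h).mul_left (z ^ m)⁻¹).congr fun k => ?_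
    field_simp
    ring

theorem hasSum_mul_pow_of_hasSum_shift {K : Type*} [CommRing K] [TopologicalSpace K]
    [IsTopologicalRing K] {A : ℕ → K} {m : ℕ} (h0 : ∀ n < m, A n = 0) {z s : K}
    (h : HasSum (fun k => A (k + m) * z ^ k) s) : HasSum (fun n => A n * z ^ n) (z ^ m * s) := by
  rw [← hasSum_nat_add_iff' m, Finset.sum_eq_zero fun n hn => by
    rw [h0 n (Finset.mem_range.1 hn), zero_mul], sub_zero]
  exact (h.mul_left (z ^ m)).congr_fun fun k => by ring

theorem two_thirds_le_one_sub_pow_iff {m : ℕ} {r : ℝ} (hr : r ≤ 1) :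
    2 / 3 ≤ (1 - r) ^ (m + 1) ↔ r ≤ 1 - (2 / 3 : ℝ) ^ ((1 : ℝ) / ((m : ℝ) + 1)) := by
  have hc : ((2 / 3 : ℝ) ^ ((1 : ℝ) / ((m : ℝ) + 1))) ^ (m + 1) = 2 / 3 := by
    rw [one_div, show (m : ℝ) + 1 = ((m + 1 : ℕ) : ℝ) by push_cast; ring]
    exact Real.rpow_inv_natCast_pow (by norm_num) m.succ_ne_zero
  conv_lhs => rw [← hc]
  rw [pow_le_pow_iff_left₀ (by positivity) (by linarith) m.succ_ne_zero]
  constructor <;> intro h <;> linarith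

theorem summable_and_tsum_choose_mul_norm_le_one {E : Type*} [SeminormedAddCommGroup E]
    {b : ℕ → E} {m : ℕ} {r : ℝ} (hr0 : 0 ≤ r)
    (hr1 : r < 1) (hr : 2 / 3 ≤ (1 - r) ^ (m + 1))
    (hb : ∀ k, k ≠ 0 → ‖b k‖ ≤ 1 - ‖b 0‖ ^ 2) :
    Summable (fun k => ((k + m).choose m : ℝ) * ‖b k‖ * r ^ k) ∧
      ∑' k, ((k + m).choose m : ℝ) * ‖b k‖ * r ^ k ≤ 1 := by
  set t := ‖b 0‖
  have hV := hasSum_choose_mul_geometric_of_norm_lt_one m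
    (by rwa [Real.norm_of_nonneg hr0] : ‖r‖ < 1)
  have hmaj := (hV.mul_left (1 - t ^ 2)).add (hasSum_ite_eq 0 (t - (1 - t ^ 2)))
  have hle : ∀ k, ((k + m).choose m : ℝ) * ‖b k‖ * r ^ k
      ≤ (1 - t ^ 2) * (((k + m).choose m : ℝ) * r ^ k)
        + if k = 0 then t - (1 - t ^ 2) else 0 := by
    rintro (_ | k)
    · simp [t]
    · have := mul_le_mul_of_nonneg_left (hb (k + 1) k.succ_ne_zero)
        (by positivity : (0 : ℝ) ≤ ((k + 1 + m).choose m : ℝ) * r ^ (k + 1))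
      simp only [Nat.succ_ne_zero, if_false, add_zero]
      linarith
  have hS : Summable fun k => ((k + m).choose m : ℝ) * ‖b k‖ * r ^ k :=
    hmaj.summable.of_nonneg_of_le (fun k => by positivity) hle
  refine ⟨hS, (hasSum_le hle hS.hasSum hmaj).trans ?_⟩
  have hV32 : 1 / (1 - r) ^ (m + 1) ≤ 3 / 2 := by
    rw [div_le_iff₀ (by positivity)]; linarith
  have ht2 : 0 ≤ 1 - t ^ 2 := (norm_nonneg _).trans (hb 1 one_ne_zero)
  nlinarith [mul_le_mul_of_nonneg_left hV32 ht2, sq_nonneg (1 - t)]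

def mobiusCoeff (t : ℂ) : ℕ → ℂ
  | 0 => t
  | k + 1 => -(1 - t ^ 2) * t ^ k

theorem hasSum_mobiusCoeff_mul_pow {t z : ℂ} (h : ‖t * z‖ < 1) :
    HasSum (fun k => mobiusCoeff t k * z ^ k) ((t - z) / (1 - t * z)) := by
  have hne : 1 - t * z ≠ 0 := fun h0 => by
    rw [← sub_eq_zero.1 h0, norm_one] at h; exact lt_irrefl _ h
  rw [← hasSum_nat_add_iff' 1, Finset.sum_range_one, pow_zero, mul_one,
    show (t - z) / (1 - t * z) - mobiusCoeff t 0 = -(1 - t ^ 2) * z * (1 - t * z)⁻¹ by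
      simp only [mobiusCoeff]; field_simp; ring]
  exact ((hasSum_geometric_of_norm_lt_one h).mul_left _).congr_fun fun k => by
    simp only [mobiusCoeff]; ring

theorem norm_mobiusCoeff_succ {t : ℝ} (ht0 : 0 ≤ t) (ht1 : t ≤ 1) (k : ℕ) :
    ‖mobiusCoeff t (k + 1)‖ = (1 - t ^ 2) * t ^ k := by
  rw [mobiusCoeff, norm_mul, norm_neg, norm_pow, Complex.norm_real, Real.norm_of_nonneg ht0]
  norm_cast
  rw [Real.norm_of_nonneg (by nlinarith)]

noncomputable def mobiusMajorant (m : ℕ) (t r : ℝ) : ℝ :=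
  t + (1 - t ^ 2) / t * (1 / (1 - t * r) ^ (m + 1) - 1)

theorem hasSum_choose_mul_norm_mobiusCoeff (m : ℕ) {t r : ℝ} (ht0 : 0 < t) (ht1 : t ≤ 1)
    (hr0 : 0 ≤ r) (htr : t * r < 1) :
    HasSum (fun k => ((k + m).choose m : ℝ) * ‖mobiusCoeff t k‖ * r ^ k)
      (mobiusMajorant m t r) := by
  have hV := hasSum_choose_mul_geometric_of_norm_lt_one m
    (by rwa [Real.norm_of_nonneg (by positivity)] : ‖t * r‖ < 1)
  rw [← hasSum_nat_add_iff' 1, Finset.sum_range_one] at hV ⊢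
  have hval : mobiusMajorant m t r - ((0 + m).choose m : ℝ) * ‖mobiusCoeff t 0‖ * r ^ 0
      = (1 - t ^ 2) / t * (1 / (1 - t * r) ^ (m + 1) - ((0 + m).choose m : ℝ) * (t * r) ^ 0) := by
    simp [mobiusMajorant, mobiusCoeff, Real.norm_of_nonneg ht0.le]
  rw [hval]
  refine (hV.mul_left ((1 - t ^ 2) / t)).congr_fun fun k => ?_
  rw [norm_mobiusCoeff_succ ht0.le ht1]
  field_simp
  ring

theorem exists_one_lt_mobiusMajorant {m : ℕ} {r : ℝ} (hr1 : r < 1)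
    (hr : (1 - r) ^ (m + 1) < 2 / 3) : ∃ t ∈ Ioo (0 : ℝ) 1, 1 < mobiusMajorant m t r := by
  set G : ℝ → ℝ := fun u => (1 + u) * (1 / (1 - u * r) ^ (m + 1) - 1) - u
  have hG1 : 0 < G 1 := by
    have : 3 / 2 < 1 / (1 - 1 * r) ^ (m + 1) := by
      rw [one_mul, lt_div_iff₀ (pow_pos (by linarith) _)]; linarith
    simp only [G]
    linarith
  have hG : ContinuousAt G 1 := by
    have : (1 - 1 * r) ^ (m + 1) ≠ 0 := by rw [one_mul]; exact pow_ne_zero _ (by linarith)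
    fun_prop (disch := assumption)
  obtain ⟨t, hGt, ht⟩ := ((hG.eventually (lt_mem_nhds hG1)).filter_mono nhdsWithin_le_nhds |>.and
    (Ioo_mem_nhdsLT (show (0 : ℝ) < 1 by norm_num))).exists
  refine ⟨t, ht, ?_⟩
  have key : mobiusMajorant m t r - 1 = (1 - t) / t * G t := by
    have : (1 - t * r) ^ (m + 1) ≠ 0 := pow_ne_zero _ (by nlinarith [ht.1, ht.2])
    have : t ≠ 0 := ht.1.ne'
    simp only [mobiusMajorant, G]
    field_simp
    ring
  have : 0 < (1 - t) / t * G t := mul_pos (div_pos (by linarith [ht.2]) ht.1) hGt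
  linarith

theorem summable_and_tsum_choose_mul_norm_coeff_le_one {f : ℂ → ℂ} {A : ℕ → ℂ} {m : ℕ} {r : ℝ}
    (hf : ∀ z ∈ ball (0 : ℂ) 1, HasSum (fun n => A n * z ^ n) (f z)) (h0 : ∀ n < m, A n = 0)
    (hb : ∀ z ∈ ball (0 : ℂ) 1, ‖f z‖ ≤ 1) (hr0 : 0 ≤ r) (hr1 : r < 1)
    (hr : 2 / 3 ≤ (1 - r) ^ (m + 1)) :
    Summable (fun k => ((k + m).choose m : ℝ) * ‖A (k + m)‖ * r ^ k) ∧
      ∑' k, ((k + m).choose m : ℝ) * ‖A (k + m)‖ * r ^ k ≤ 1 := by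
  set g := fun z => ∑' k, A (k + m) * z ^ k
  have hg : ∀ z ∈ ball (0 : ℂ) 1, HasSum (fun k => A (k + m) * z ^ k) (g z) := fun z hz =>
    (summable_shift_of_summable m (hf z hz).summable).hasSum
  have hg1 : ∀ z ∈ ball (0 : ℂ) 1, ‖g z‖ ≤ 1 := norm_le_one_of_norm_pow_mul_le_one
    (differentiableOn_tsum_of_summable fun z hz => (hg z hz).summable)
    fun z hz => (hf z hz).unique (hasSum_mul_pow_of_hasSum_shift h0 (hg z hz)) ▸ hb z hz
  exact summable_and_tsum_choose_mul_norm_le_one hr0 hr1 hr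
    fun k hk => norm_coeff_le_one_sub_sq (B := fun k => A (k + m)) hg hg1 hk

theorem exists_hasSum_norm_le_one_one_lt_tsum (m : ℕ) {r : ℝ} (hr1 : r < 1)
    (hr : (1 - r) ^ (m + 1) < 2 / 3) :
    ∃ (f : ℂ → ℂ) (A : ℕ → ℂ),
      (∀ z ∈ ball (0 : ℂ) 1, HasSum (fun n => A n * z ^ n) (f z)) ∧ (∀ n, n < m → A n = 0) ∧
      (∀ z ∈ ball (0 : ℂ) 1, ‖f z‖ ≤ 1) ∧
      Summable (fun k => ((k + m).choose m : ℝ) * ‖A (k + m)‖ * r ^ k) ∧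
      1 < ∑' k, ((k + m).choose m : ℝ) * ‖A (k + m)‖ * r ^ k := by
  obtain ⟨t, ⟨ht0, ht1⟩, hgt⟩ := exists_one_lt_mobiusMajorant hr1 hr
  have hr0 : 0 ≤ r := by
    by_contra! h
    linarith [one_le_pow₀ (show (1 : ℝ) ≤ 1 - r by linarith) (n := m + 1)]
  set A : ℕ → ℂ := fun n => if n < m then 0 else mobiusCoeff t (n - m)
  have h0 : ∀ n < m, A n = 0 := fun n hn => if_pos hn
  have hA : ∀ k, A (k + m) = mobiusCoeff t k := fun k => by simp [A]
  have hsum := hasSum_choose_mul_norm_mobiusCoeff m ht0 ht1.le hr0 (by nlinarith)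
  simp_rw [← hA] at hsum
  refine ⟨fun z => z ^ m * ((t - z) / (1 - t * z)), A, fun z hz => ?_, h0, fun z hz => ?_,
    hsum.summable, hsum.tsum_eq ▸ hgt⟩
  all_goals rw [mem_ball_zero_iff] at hz
  · have htz : ‖(t : ℂ) * z‖ < 1 := by
      rw [norm_mul, Complex.norm_real, Real.norm_of_nonneg ht0.le]
      nlinarith [norm_nonneg z]
    exact hasSum_mul_pow_of_hasSum_shift h0
      (by simpa only [hA] using hasSum_mobiusCoeff_mul_pow htz)
  · have := norm_sub_le_norm_one_sub_conj_mul (a := t) (w := z)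
      (by rw [Complex.norm_real, Real.norm_of_nonneg ht0.le]; exact ht1.le) hz.le
    rw [Complex.conj_ofReal] at this
    rw [norm_mul, norm_pow, norm_div]
    exact mul_le_one₀ (pow_le_one₀ (norm_nonneg _) hz.le) (by positivity)
      (div_le_one_of_le₀ this (norm_nonneg _))

theorem bohr_radius_normalized_mth_derivative (m : ℕ) :
    (∀ (f : ℂ → ℂ) (A : ℕ → ℂ),
      (∀ z ∈ Metric.ball (0 : ℂ) 1, HasSum (fun n : ℕ => A n * z ^ n) (f z)) →
      (∀ n, n < m → A n = 0) →
      (∀ z ∈ Metric.ball (0 : ℂ) 1, ‖f z‖ ≤ 1) →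
      ∀ r : ℝ, 0 ≤ r → r ≤ 1 - (2 / 3 : ℝ) ^ ((1 : ℝ) / ((m : ℝ) + 1)) →
        Summable (fun n : ℕ => (Nat.choose (n + m) m : ℝ) * ‖A (n + m)‖ * r ^ n) ∧
        ∑' n : ℕ, (Nat.choose (n + m) m : ℝ) * ‖A (n + m)‖ * r ^ n ≤ 1) ∧
    (∀ r : ℝ, 1 - (2 / 3 : ℝ) ^ ((1 : ℝ) / ((m : ℝ) + 1)) < r → r < 1 →
      ∃ (f : ℂ → ℂ) (A : ℕ → ℂ),
        (∀ z ∈ Metric.ball (0 : ℂ) 1, HasSum (fun n : ℕ => A n * z ^ n) (f z)) ∧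
        (∀ n, n < m → A n = 0) ∧
        (∀ z ∈ Metric.ball (0 : ℂ) 1, ‖f z‖ ≤ 1) ∧
        Summable (fun n : ℕ => (Nat.choose (n + m) m : ℝ) * ‖A (n + m)‖ * r ^ n) ∧
        1 < ∑' n : ℕ, (Nat.choose (n + m) m : ℝ) * ‖A (n + m)‖ * r ^ n) := by
  refine ⟨fun f A hf h0 hb r hr0 hr => ?_, fun r hr hr1 => ?_⟩
  · have hr1 : r < 1 := by
      linarith [(by positivity : 0 < (2 / 3 : ℝ) ^ ((1 : ℝ) / ((m : ℝ) + 1)))]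
    exact summable_and_tsum_choose_mul_norm_coeff_le_one hf h0 hb hr0 hr1
      ((two_thirds_le_one_sub_pow_iff hr1.le).2 hr)
  · exact exists_hasSum_norm_le_one_one_lt_tsum m hr1
      (not_le.1 fun h => hr.not_ge ((two_thirds_le_one_sub_pow_iff hr1.le).1 h))
end

section
/- Let m ∈ ℕ and a ∈ [0,1). If f(z) = ∑_{n≥m} a_n zⁿ is analytic on 𝔻 with ‖f‖_∞ ≤ 1 and |a_m| = a, then for every 0 ≤ r ≤ 1 − ((1+a)/(2+a))^{1/(m+1)} one has ∑_{n≥m} C(n,m) |a_n| r^{n−m} ≤ 1. -/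
open Metric Filter

/-!
Write `f = zᵐ g`; by the maximum principle `‖g‖ ≤ 1` on the disk, and `g` has coefficients
`A (n + m)`, the first of norm `a`. For `k ≥ 1`, the function `h(w) = ∑ⱼ A (jk + m) wʲ` is bounded
by `1` as well, since `h(zᵏ)` is the average of `g` over the rotations of `z` by the `k`-th roots
of unity; the Schwarz–Pick bound `‖h'(0)‖ ≤ 1 - ‖h(0)‖²` then gives `‖A (k + m)‖ ≤ 1 - a²`.
The series is therefore at most `a + (1 - a²)((1 - r)^{-(m+1)} - 1)`, and the choice of `r` means
`(1 - r)^{-(m+1)} ≤ (2 + a)/(1 + a)`, so this is at most `a + (1 - a²)/(1 + a) = 1`.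
-/

open ComplexConjugate

noncomputable def blaschkeFactor (k u : ℂ) : ℂ := (u - k) / (1 - conj k * u)

lemma norm_one_sub_conj_mul_sq_sub_norm_sub_sq (k u : ℂ) :
    ‖1 - conj k * u‖ ^ 2 - ‖u - k‖ ^ 2 = (1 - ‖k‖ ^ 2) * (1 - ‖u‖ ^ 2) := by
  apply Complex.ofReal_injective
  push_cast
  simp only [← Complex.mul_conj', map_sub, map_mul, map_one, Complex.conj_conj]
  ring

lemma one_sub_conj_mul_ne_zero {k u : ℂ} (hk : ‖k‖ < 1) (hu : ‖u‖ ≤ 1) :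
    1 - conj k * u ≠ 0 := by
  rw [sub_ne_zero]
  intro h
  have : ‖conj k * u‖ < 1 := by
    rw [norm_mul, RCLike.norm_conj]
    nlinarith [norm_nonneg k, norm_nonneg u]
  rw [← h, norm_one] at this
  exact this.false

lemma norm_blaschkeFactor_le_one {k u : ℂ} (hk : ‖k‖ < 1) (hu : ‖u‖ ≤ 1) :
    ‖blaschkeFactor k u‖ ≤ 1 := by
  have hden := norm_pos_iff.2 (one_sub_conj_mul_ne_zero hk hu)
  rw [blaschkeFactor, norm_div, div_le_one hden]
  have hid := norm_one_sub_conj_mul_sq_sub_norm_sub_sq k u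
  have hsq : ‖u - k‖ ^ 2 ≤ ‖1 - conj k * u‖ ^ 2 := by
    nlinarith [mul_nonneg (sub_nonneg.2 (pow_le_one₀ (norm_nonneg k) hk.le (n := 2)))
      (sub_nonneg.2 (pow_le_one₀ (norm_nonneg u) hu (n := 2)))]
  exact (pow_le_pow_iff_left₀ (norm_nonneg _) hden.le two_ne_zero).1 hsq

lemma blaschkeFactor_self (k : ℂ) : blaschkeFactor k k = 0 := by
  simp [blaschkeFactor]

lemma differentiableAt_blaschkeFactor {k u : ℂ} (hu : 1 - conj k * u ≠ 0) :
    DifferentiableAt ℂ (blaschkeFactor k) u :=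
  ((differentiableAt_id.sub_const k).div
    ((differentiableAt_const _).sub (differentiableAt_id.const_mul _)) hu)

lemma hasDerivAt_blaschkeFactor_self {k : ℂ} (hk : ‖k‖ < 1) :
    HasDerivAt (blaschkeFactor k) (1 - (‖k‖ : ℂ) ^ 2)⁻¹ k := by
  have hnorm : conj k * k = (‖k‖ : ℂ) ^ 2 := Complex.conj_mul' k
  have hne : 1 - (‖k‖ : ℂ) ^ 2 ≠ 0 := by
    rw [← hnorm]; exact one_sub_conj_mul_ne_zero hk hk.le
  have hne' : 1 - conj k * k ≠ 0 := hnorm ▸ hne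
  refine HasDerivAt.congr_deriv (f := blaschkeFactor k) (((hasDerivAt_id' k).sub_const k).div
    (((hasDerivAt_id' k).const_mul (conj k)).const_sub 1) hne') ?_
  rw [hnorm]
  field_simp
  ring

lemma norm_deriv_le_one_sub_sq {g : ℂ → ℂ} (hd : DifferentiableOn ℂ g (ball 0 1))
    (hbd : ∀ z ∈ ball (0 : ℂ) 1, ‖g z‖ ≤ 1) (h0 : ‖g 0‖ < 1) :
    ‖deriv g 0‖ ≤ 1 - ‖g 0‖ ^ 2 := by
  have hden : ∀ z ∈ ball (0 : ℂ) 1, 1 - conj (g 0) * g z ≠ 0 := fun z hz =>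
    one_sub_conj_mul_ne_zero h0 (hbd z hz)
  have hd' : DifferentiableOn ℂ (blaschkeFactor (g 0) ∘ g) (ball 0 1) := fun z hz =>
    (differentiableAt_blaschkeFactor (hden z hz)).comp_differentiableWithinAt z (hd z hz)
  have hmaps : Set.MapsTo (blaschkeFactor (g 0) ∘ g) (ball 0 1)
      (closedBall ((blaschkeFactor (g 0) ∘ g) 0) 1) := fun z hz => by
    simpa [blaschkeFactor_self] using norm_blaschkeFactor_le_one h0 (hbd z hz)
  have hderiv : HasDerivAt (blaschkeFactor (g 0) ∘ g)
      ((1 - (‖g 0‖ : ℂ) ^ 2)⁻¹ * deriv g 0) 0 :=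
    (hasDerivAt_blaschkeFactor_self h0).comp 0
      (hd.differentiableAt (ball_mem_nhds 0 one_pos)).hasDerivAt
  have hschwarz := Complex.norm_deriv_le_one_of_mapsTo_ball hd' hmaps one_pos
  have hpos : 0 < 1 - ‖g 0‖ ^ 2 := by nlinarith [norm_nonneg (g 0)]
  have hnorm : ‖1 - (‖g 0‖ : ℂ) ^ 2‖ = 1 - ‖g 0‖ ^ 2 := by
    rw [show (1 : ℂ) - (‖g 0‖ : ℂ) ^ 2 = ((1 - ‖g 0‖ ^ 2 : ℝ) : ℂ) by push_cast; ring,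
      Complex.norm_real, Real.norm_of_nonneg hpos.le]
  rwa [hderiv.deriv, norm_mul, norm_inv, hnorm, inv_mul_le_iff₀ hpos, mul_one] at hschwarz

lemma IsPrimitiveRoot.geom_sum_pow_eq {R : Type*} [CommRing R] [IsDomain R] {ζ : R} {k : ℕ}
    (hζ : IsPrimitiveRoot ζ k) (n : ℕ) :
    ∑ i ∈ Finset.range k, (ζ ^ n) ^ i = if k ∣ n then (k : R) else 0 := by
  split_ifs with hkn
  · simp [(hζ.pow_eq_one_iff_dvd n).2 hkn]
  · have hne : 1 - ζ ^ n ≠ 0 := sub_ne_zero.2 fun h => hkn ((hζ.pow_eq_one_iff_dvd n).1 h.symm)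
    refine mul_left_cancel₀ hne ?_
    rw [mul_neg_geom_sum, ← pow_mul, mul_comm, pow_mul, hζ.pow_eq_one, one_pow, sub_self, mul_zero]

lemma norm_le_of_norm_pow_mul_le {g : ℂ → ℂ} {m : ℕ} {M : ℝ}
    (hd : DifferentiableOn ℂ g (ball 0 1)) (hM : ∀ z ∈ ball (0 : ℂ) 1, ‖z ^ m * g z‖ ≤ M) :
    ∀ z ∈ ball (0 : ℂ) 1, ‖g z‖ ≤ M := by
  intro z hz
  have hz : ‖z‖ < 1 := mem_ball_zero_iff.1 hz
  have hρ : ∀ ρ ∈ Set.Ioo ‖z‖ 1, ‖g z‖ ≤ M / ρ ^ m := by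
    rintro ρ ⟨hzρ, hρ1⟩
    have hρ0 : 0 < ρ := (norm_nonneg z).trans_lt hzρ
    have hsub : closure (ball (0 : ℂ) ρ) ⊆ ball 0 1 := by
      rw [closure_ball 0 hρ0.ne']
      exact closedBall_subset_ball hρ1
    refine Complex.norm_le_of_forall_mem_frontier_norm_le isBounded_ball
      (hd.mono hsub).diffContOnCl (fun w hw => ?_) (subset_closure (mem_ball_zero_iff.2 hzρ))
    rw [frontier_ball 0 hρ0.ne', mem_sphere_zero_iff_norm] at hw
    have := hM w (mem_ball_zero_iff.2 (hw ▸ hρ1))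
    rw [norm_mul, norm_pow, hw] at this
    rwa [le_div_iff₀ (pow_pos hρ0 m), mul_comm]
  have hlim : Tendsto (fun ρ : ℝ => M / ρ ^ m) (nhdsWithin 1 (Set.Iio 1)) (nhds M) := by
    have : Tendsto (fun ρ : ℝ => M / ρ ^ m) (nhds 1) (nhds (M / 1 ^ m)) :=
      tendsto_const_nhds.div (tendsto_id.pow m) (by simp)
    simpa using this.mono_left nhdsWithin_le_nhds
  exact ge_of_tendsto hlim (Filter.mem_of_superset (Ioo_mem_nhdsLT hz) hρ)

lemma eball_one_eq_ball {α : Type*} [PseudoMetricSpace α] (x : α) : eball x 1 = ball x 1 := by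
  simpa using eball_coe (x := x) (ε := 1)

section

variable {c : ℕ → ℂ} {g : ℂ → ℂ}

lemma hasFPowerSeriesOnBall_ofScalars_of_hasSum
    (hg : ∀ z ∈ ball (0 : ℂ) 1, HasSum (fun n => c n * z ^ n) (g z)) :
    HasFPowerSeriesOnBall g (FormalMultilinearSeries.ofScalars ℂ c) 0 1 where
  r_le := by
    refine ENNReal.le_of_forall_nnreal_lt fun r hr => ?_
    have hr : (r : ℂ) ∈ ball (0 : ℂ) 1 := by simpa using hr
    refine FormalMultilinearSeries.le_radius_of_tendsto _ (l := 0) ?_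
    simpa [FormalMultilinearSeries.ofScalars_norm] using (hg _ hr).summable.tendsto_atTop_zero.norm
  r_pos := one_pos
  hasSum {z} hz := by
    rw [eball_one_eq_ball] at hz
    simpa [FormalMultilinearSeries.ofScalars_apply_eq, mul_comm] using hg z hz

lemma differentiableOn_of_hasSum
    (hg : ∀ z ∈ ball (0 : ℂ) 1, HasSum (fun n => c n * z ^ n) (g z)) :
    DifferentiableOn ℂ g (ball 0 1) := by
  simpa [eball_one_eq_ball] using (hasFPowerSeriesOnBall_ofScalars_of_hasSum hg).differentiableOn

lemma exists_hasSum_coeff_add_and_pow_mul_eq {m : ℕ}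
    (hg : ∀ z ∈ ball (0 : ℂ) 1, HasSum (fun n => c n * z ^ n) (g z))
    (hc : ∀ n < m, c n = 0) :
    ∃ h : ℂ → ℂ, (∀ z ∈ ball (0 : ℂ) 1, HasSum (fun n => c (n + m) * z ^ n) (h z)) ∧
      ∀ z ∈ ball (0 : ℂ) 1, z ^ m * h z = g z := by
  have htail : ∀ z ∈ ball (0 : ℂ) 1, HasSum (fun n => c (n + m) * z ^ (n + m)) (g z) := by
    intro z hz
    have hhead : ∑ i ∈ Finset.range m, c i * z ^ i = 0 :=
      Finset.sum_eq_zero fun i hi => by rw [hc i (Finset.mem_range.1 hi), zero_mul]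
    simpa [hhead] using (hasSum_nat_add_iff' m).2 (hg z hz)
  have hsummable : ∀ z ∈ ball (0 : ℂ) 1, Summable fun n => c (n + m) * z ^ n := by
    intro z hz
    rcases eq_or_ne z 0 with rfl | hz0
    · exact (hasSum_single 0 fun n hn => by simp [zero_pow hn]).summable
    · refine ((htail z hz).summable.mul_right (z ^ m)⁻¹).congr fun n => ?_
      rw [pow_add, mul_assoc, mul_assoc, mul_inv_cancel₀ (pow_ne_zero m hz0), mul_one]
  refine ⟨fun z => ∑' n, c (n + m) * z ^ n, fun z hz => (hsummable z hz).hasSum, fun z hz => ?_⟩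
  refine HasSum.unique ?_ (htail z hz)
  simpa [pow_add, mul_comm, mul_left_comm] using (hsummable z hz).hasSum.mul_left (z ^ m)

lemma hasSum_coeff_mul_pow_pow_eq_average {k : ℕ} {ω z : ℂ}
    (hg : ∀ z ∈ ball (0 : ℂ) 1, HasSum (fun n => c n * z ^ n) (g z))
    (hω : IsPrimitiveRoot ω k) (hk : 0 < k) (hz : z ∈ ball (0 : ℂ) 1) :
    HasSum (fun j => c (j * k) * (z ^ k) ^ j)
      ((k : ℂ)⁻¹ * ∑ i ∈ Finset.range k, g (ω ^ i * z)) := by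
  have hk' : (k : ℂ) ≠ 0 := Nat.cast_ne_zero.2 hk.ne'
  have hrot : ∀ i, ω ^ i * z ∈ ball (0 : ℂ) 1 := fun i => by
    simpa [hω.norm'_eq_one hk.ne'] using hz
  have hrotations : HasSum (fun n => ∑ i ∈ Finset.range k, c n * (ω ^ i * z) ^ n)
      (∑ i ∈ Finset.range k, g (ω ^ i * z)) :=
    hasSum_sum fun i _ => hg _ (hrot i)
  have hfilter : ∀ n, (k : ℂ)⁻¹ * ∑ i ∈ Finset.range k, c n * (ω ^ i * z) ^ n
      = if k ∣ n then c n * z ^ n else 0 := by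
    intro n
    simp_rw [mul_pow, ← pow_mul, mul_comm _ n, pow_mul, ← mul_assoc, mul_comm (c n),
      mul_assoc, ← Finset.sum_mul, hω.geom_sum_pow_eq n]
    split_ifs
    · field_simp
    · simp
  have hmultiples : HasSum (fun n => if k ∣ n then c n * z ^ n else 0)
      ((k : ℂ)⁻¹ * ∑ i ∈ Finset.range k, g (ω ^ i * z)) :=
    (hrotations.mul_left _).congr_fun fun n => (hfilter n).symm
  have hmul : Function.Injective (· * k) := mul_left_injective₀ hk.ne'
  refine ((hmul.hasSum_iff fun n hn => ?_).2 hmultiples).congr_fun fun j => ?_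
  · exact if_neg fun ⟨j, hj⟩ => hn ⟨j, by rw [hj, mul_comm]⟩
  · simp [← pow_mul, mul_comm]

lemma exists_hasSum_coeff_mul_and_norm_le {k : ℕ} {M : ℝ}
    (hg : ∀ z ∈ ball (0 : ℂ) 1, HasSum (fun n => c n * z ^ n) (g z))
    (hM : ∀ z ∈ ball (0 : ℂ) 1, ‖g z‖ ≤ M) (hk : 0 < k) :
    ∃ h : ℂ → ℂ, (∀ w ∈ ball (0 : ℂ) 1, HasSum (fun j => c (j * k) * w ^ j) (h w)) ∧
      ∀ w ∈ ball (0 : ℂ) 1, ‖h w‖ ≤ M := by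
  obtain ⟨ω, hω⟩ : ∃ ω : ℂ, IsPrimitiveRoot ω k := ⟨_, Complex.isPrimitiveRoot_exp k hk.ne'⟩
  have hroot : ∀ w ∈ ball (0 : ℂ) 1, ∃ z ∈ ball (0 : ℂ) 1, z ^ k = w := by
    intro w hw
    obtain ⟨z, rfl⟩ := IsAlgClosed.exists_pow_nat_eq w hk
    refine ⟨z, ?_, rfl⟩
    rw [mem_ball_zero_iff, norm_pow] at hw
    exact mem_ball_zero_iff.2 ((pow_lt_one_iff_of_nonneg (norm_nonneg z) hk.ne').1 hw)
  refine ⟨fun w => ∑' j, c (j * k) * w ^ j, fun w hw => ?_, fun w hw => ?_⟩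
  · obtain ⟨z, hz, rfl⟩ := hroot w hw
    exact (hasSum_coeff_mul_pow_pow_eq_average hg hω hk hz).summable.hasSum
  · obtain ⟨z, hz, rfl⟩ := hroot w hw
    have hrot : ∀ i, ω ^ i * z ∈ ball (0 : ℂ) 1 := fun i => by
      simpa [hω.norm'_eq_one hk.ne'] using hz
    dsimp only
    rw [(hasSum_coeff_mul_pow_pow_eq_average hg hω hk hz).tsum_eq, norm_mul, norm_inv,
      Complex.norm_natCast, inv_mul_le_iff₀ (Nat.cast_pos.2 hk)]
    calc ‖∑ i ∈ Finset.range k, g (ω ^ i * z)‖ ≤ ∑ i ∈ Finset.range k, ‖g (ω ^ i * z)‖ :=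
          norm_sum_le _ _
      _ ≤ k * M := by
        simpa using Finset.sum_le_card_nsmul (Finset.range k) _ M fun i _ => hM _ (hrot i)

lemma norm_coeff_one_le_one_sub_sq
    (hg : ∀ z ∈ ball (0 : ℂ) 1, HasSum (fun n => c n * z ^ n) (g z))
    (hbd : ∀ z ∈ ball (0 : ℂ) 1, ‖g z‖ ≤ 1) (hc : ‖c 0‖ < 1) :
    ‖c 1‖ ≤ 1 - ‖c 0‖ ^ 2 := by
  have hps := (hasFPowerSeriesOnBall_ofScalars_of_hasSum hg).hasFPowerSeriesAt
  have hg0 : g 0 = c 0 := by simpa using (hps.coeff_zero fun _ => 0).symm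
  have hderiv : deriv g 0 = c 1 := by simpa using hps.hasDerivAt.deriv
  simpa [hg0, hderiv] using
    norm_deriv_le_one_sub_sq (differentiableOn_of_hasSum hg) hbd (hg0 ▸ hc)

lemma norm_coeff_le_one_sub_sq_s5 {k : ℕ}
    (hg : ∀ z ∈ ball (0 : ℂ) 1, HasSum (fun n => c n * z ^ n) (g z))
    (hbd : ∀ z ∈ ball (0 : ℂ) 1, ‖g z‖ ≤ 1) (hc : ‖c 0‖ < 1) (hk : 0 < k) :
    ‖c k‖ ≤ 1 - ‖c 0‖ ^ 2 := by
  obtain ⟨h, hh, hbd'⟩ := exists_hasSum_coeff_mul_and_norm_le hg hbd hk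
  simpa using norm_coeff_one_le_one_sub_sq hh hbd' (by simpa using hc)

end

lemma le_one_sub_pow_of_le_one_sub_rpow {x r : ℝ} {n : ℕ} (hx : 0 ≤ x)
    (h : r ≤ 1 - x ^ ((1 : ℝ) / ((n : ℝ) + 1))) : x ≤ (1 - r) ^ (n + 1) := by
  have hroot : (x ^ ((1 : ℝ) / ((n : ℝ) + 1))) ^ (n + 1) = x := by
    simpa [one_div] using Real.rpow_inv_natCast_pow hx n.succ_ne_zero
  calc x = (x ^ ((1 : ℝ) / ((n : ℝ) + 1))) ^ (n + 1) := hroot.symm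
    _ ≤ (1 - r) ^ (n + 1) := pow_le_pow_left₀ (Real.rpow_nonneg hx _) (by linarith) _

lemma summable_and_tsum_choose_mul_pow_le_one {m : ℕ} {a r : ℝ} {α : ℕ → ℝ} (ha : 0 ≤ a)
    (hα : ∀ n, 0 ≤ α n) (hα0 : α 0 = a) (hα_pos : ∀ n, 0 < n → α n ≤ 1 - a ^ 2)
    (hr0 : 0 ≤ r) (hr1 : r < 1) (hr : (1 + a) / (2 + a) ≤ (1 - r) ^ (m + 1)) :
    Summable (fun n => ((n + m).choose m : ℝ) * α n * r ^ n) ∧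
      ∑' n, ((n + m).choose m : ℝ) * α n * r ^ n ≤ 1 := by
  have hb : 0 ≤ 1 - a ^ 2 := (hα 1).trans (hα_pos 1 one_pos)
  have hgeom : HasSum (fun n => ((n + m).choose m : ℝ) * r ^ n) (1 / (1 - r) ^ (m + 1)) :=
    hasSum_choose_mul_geometric_of_norm_lt_one m (by rwa [Real.norm_of_nonneg hr0])
  have hmajor : HasSum
      (fun n => (1 - a ^ 2) * (((n + m).choose m : ℝ) * r ^ n) + if n = 0 then a - (1 - a ^ 2) else 0)
      ((1 - a ^ 2) * (1 / (1 - r) ^ (m + 1)) + (a - (1 - a ^ 2))) :=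
    (hgeom.mul_left _).add (hasSum_ite_eq 0 _)
  have hle : ∀ n, ((n + m).choose m : ℝ) * α n * r ^ n ≤
      (1 - a ^ 2) * (((n + m).choose m : ℝ) * r ^ n) + if n = 0 then a - (1 - a ^ 2) else 0 := by
    intro n
    rcases n.eq_zero_or_pos with rfl | hn
    · simp [hα0]
    · rw [if_neg hn.ne', add_zero, mul_left_comm, mul_assoc]
      gcongr
      exact hα_pos n hn
  have hsummable := Summable.of_nonneg_of_le (fun n => by have := hα n; positivity) hle
    hmajor.summable
  refine ⟨hsummable, (hasSum_le hle hsummable.hasSum hmajor).trans ?_⟩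
  have hgeom_le : 1 / (1 - r) ^ (m + 1) ≤ (2 + a) / (1 + a) := by
    simpa using one_div_le_one_div_of_le (by positivity) hr
  calc (1 - a ^ 2) * (1 / (1 - r) ^ (m + 1)) + (a - (1 - a ^ 2))
      ≤ (1 - a ^ 2) * ((2 + a) / (1 + a)) + (a - (1 - a ^ 2)) := by gcongr
    _ = 1 := by field_simp; ring

theorem bohr_radius_normalized_mth_derivative_initial_coefficient_lower_bound
    (m : ℕ) (a : ℝ) (ha0 : 0 ≤ a) (ha1 : a < 1)
    (f : ℂ → ℂ) (A : ℕ → ℂ)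
    (hrep : ∀ z ∈ Metric.ball (0 : ℂ) 1, HasSum (fun n : ℕ => A n * z ^ n) (f z))
    (hvan : ∀ n, n < m → A n = 0)
    (hbd : ∀ z ∈ Metric.ball (0 : ℂ) 1, ‖f z‖ ≤ 1)
    (ham : ‖A m‖ = a) :
    ∀ r : ℝ, 0 ≤ r → r ≤ 1 - ((1 + a) / (2 + a)) ^ ((1 : ℝ) / ((m : ℝ) + 1)) →
      Summable (fun n : ℕ => (Nat.choose (n + m) m : ℝ) * ‖A (n + m)‖ * r ^ n) ∧
      ∑' n : ℕ, (Nat.choose (n + m) m : ℝ) * ‖A (n + m)‖ * r ^ n ≤ 1 := by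
  intro r hr0 hr
  obtain ⟨g, hg, hfg⟩ := exists_hasSum_coeff_add_and_pow_mul_eq hrep hvan
  have hgbd : ∀ z ∈ ball (0 : ℂ) 1, ‖g z‖ ≤ 1 :=
    norm_le_of_norm_pow_mul_le (differentiableOn_of_hasSum hg) fun z hz => hfg z hz ▸ hbd z hz
  have hg0 : ‖A (0 + m)‖ = a := by rw [zero_add, ham]
  have hq : 0 < ((1 + a) / (2 + a)) ^ ((1 : ℝ) / ((m : ℝ) + 1)) := by positivity
  exact summable_and_tsum_choose_mul_pow_le_one ha0 (fun n => norm_nonneg (A (n + m))) hg0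
    (fun n hn => hg0 ▸ norm_coeff_le_one_sub_sq_s5 hg hgbd (hg0 ▸ ha1) hn) hr0 (by linarith)
    (le_one_sub_pow_of_le_one_sub_rpow (by positivity) hr)
end

section
/- Let m ∈ ℕ, l ∈ ℤ with m + l ≥ 0, and let c : ℕ → ℂ with c_n = 0 for n < m. Let R_c ∈ [0, ∞] be the radius of convergence of the power series ∑_{n≥m} c_n zⁿ. Suppose r > 0 has the property that for every function f(z) = ∑_{n≥m} a_n zⁿ analytic on 𝔻 for which the series ∑_{n≥m} c_n a_n z^{n+l} converges on 𝔻 and defines a function bounded by 1 in modulus on 𝔻, one has ∑_{n≥m} |a_n| ρⁿ ≤ 1 for all ρ ∈ [0, r]. Then r · R_c ≤ 1 (as an inequality in [0, ∞]). In other words, the Bohr radius of the pair (A_h^{m,l}, identity) times the radius of convergence of the convolution function h is at most 1. -/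
open Metric Filter

theorem bohr_radius_times_convergence_radius_le_one
    (m : ℕ) (l : ℤ) (hml : 0 ≤ (m : ℤ) + l)
    (c : ℕ → ℂ) (hc0 : ∀ n, n < m → c n = 0)
    (Rc : ENNReal) (hRc : Rc = (FormalMultilinearSeries.ofScalars ℂ c).radius)
    (r : ℝ) (hr : 0 < r)
    (hbohr : ∀ (f g : ℂ → ℂ) (A : ℕ → ℂ),
      (∀ n, n < m → A n = 0) →
      (∀ z ∈ Metric.ball (0 : ℂ) 1, HasSum (fun n : ℕ => A n * z ^ n) (f z)) →
      (∀ z ∈ Metric.ball (0 : ℂ) 1,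
        HasSum (fun n : ℕ => c n * A n * z ^ ((n : ℤ) + l)) (g z)) →
      (∀ z ∈ Metric.ball (0 : ℂ) 1, ‖g z‖ ≤ 1) →
      ∀ ρ : ℝ, 0 ≤ ρ → ρ ≤ r →
        Summable (fun n : ℕ => ‖A n‖ * ρ ^ n) ∧ ∑' n : ℕ, ‖A n‖ * ρ ^ n ≤ 1) :
    ENNReal.ofReal r * Rc ≤ 1 := by
  -- Step 1: a helper fact: for n ≥ m and any a with ‖c n * a‖ ≤ 1, we get ‖a‖ * r^n ≤ 1.
  have key : ∀ n : ℕ, m ≤ n → ∀ a : ℂ, ‖c n * a‖ ≤ 1 → ‖a‖ * r ^ n ≤ 1 := by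
    intro n hn a ha
    set A : ℕ → ℂ := fun k => if k = n then a else 0 with hA
    have hA0 : ∀ k, k < m → A k = 0 := by
      intro k hk
      simp only [hA]
      rw [if_neg]
      omega
    have hf : ∀ z ∈ Metric.ball (0 : ℂ) 1,
        HasSum (fun k : ℕ => A k * z ^ k) (a * z ^ n) := by
      intro z _
      have : (fun k : ℕ => A k * z ^ k) = fun k => if k = n then a * z ^ n else 0 := by
        funext k
        simp only [hA]
        by_cases hk : k = n
        · subst hk; rw [if_pos rfl, if_pos rfl]
        · rw [if_neg hk, if_neg hk, zero_mul]
      rw [this]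
      exact hasSum_ite_eq n (a * z ^ n)
    have hg : ∀ z ∈ Metric.ball (0 : ℂ) 1,
        HasSum (fun k : ℕ => c k * A k * z ^ ((k : ℤ) + l))
          (c n * a * z ^ ((n : ℤ) + l)) := by
      intro z _
      have : (fun k : ℕ => c k * A k * z ^ ((k : ℤ) + l)) =
          fun k => if k = n then c n * a * z ^ ((n : ℤ) + l) else 0 := by
        funext k
        simp only [hA]
        by_cases hk : k = n
        · subst hk; rw [if_pos rfl, if_pos rfl]
        · rw [if_neg hk, if_neg hk, mul_zero, zero_mul]
      rw [this]
      exact hasSum_ite_eq n _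
    have hgb : ∀ z ∈ Metric.ball (0 : ℂ) 1,
        ‖c n * a * z ^ ((n : ℤ) + l)‖ ≤ 1 := by
      intro z hz
      rw [mem_ball, dist_zero_right] at hz
      have hnl : (0 : ℤ) ≤ (n : ℤ) + l := le_trans hml (by omega)
      have hz1 : ‖z ^ ((n : ℤ) + l)‖ ≤ 1 := by
        rw [← Int.toNat_of_nonneg hnl, zpow_natCast, norm_pow]
        exact pow_le_one₀ (norm_nonneg z) hz.le
      calc ‖c n * a * z ^ ((n : ℤ) + l)‖ = ‖c n * a‖ * ‖z ^ ((n : ℤ) + l)‖ := norm_mul _ _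
        _ ≤ 1 * 1 := mul_le_mul ha hz1 (norm_nonneg _) zero_le_one
        _ = 1 := one_mul 1
    obtain ⟨hS, hT⟩ := hbohr (fun z => a * z ^ n) (fun z => c n * a * z ^ ((n : ℤ) + l)) A
      hA0 hf hg hgb r hr.le le_rfl
    have : (fun k : ℕ => ‖A k‖ * r ^ k) = fun k => if k = n then ‖a‖ * r ^ n else 0 := by
      funext k
      simp only [hA]
      by_cases hk : k = n
      · subst hk; rw [if_pos rfl, if_pos rfl]
      · rw [if_neg hk, if_neg hk, norm_zero, zero_mul]
    rw [this, tsum_ite_eq] at hT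
    exact hT
  -- Step 2: r^n ≤ ‖c n‖ for n ≥ m.
  have hlow : ∀ n : ℕ, m ≤ n → r ^ n ≤ ‖c n‖ := by
    intro n hn
    have hrn : (0 : ℝ) < r ^ n := pow_pos hr n
    by_cases hcn : c n = 0
    · exfalso
      have := key n hn ((2 / r ^ n : ℝ) : ℂ) (by simp [hcn])
      rw [Complex.norm_real, Real.norm_eq_abs, abs_of_pos (by positivity)] at this
      rw [div_mul_cancel₀ _ hrn.ne'] at this
      linarith
    · have hcnorm : (0 : ℝ) < ‖c n‖ := norm_pos_iff.mpr hcn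
      have := key n hn (c n)⁻¹ (by rw [mul_inv_cancel₀ hcn, norm_one])
      rw [norm_inv] at this
      rw [inv_mul_le_iff₀ hcnorm, mul_one] at this
      exact this
  -- Step 3: radius ≤ 1/r.
  have hrad : Rc ≤ ENNReal.ofReal (1 / r) := by
    by_contra h
    push_neg at h
    obtain ⟨q, hq1, hq2⟩ := ENNReal.lt_iff_exists_nnreal_btwn.mp h
    have hq : 1 / r < (q : ℝ) := by
      rwa [ENNReal.ofReal_lt_coe_iff (by positivity)] at hq1
    rw [hRc] at hq2
    obtain ⟨C, hC, hb⟩ :=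
      (FormalMultilinearSeries.ofScalars ℂ c).norm_mul_pow_le_of_lt_radius hq2
    have hrq : 1 < r * q := by
      rw [div_lt_iff₀ hr] at hq
      linarith [mul_comm r (q : ℝ)]
    obtain ⟨k, hk⟩ := pow_unbounded_of_one_lt C hrq
    set n := max k m with hn
    have h1 : C < (r * q) ^ n :=
      lt_of_lt_of_le hk (pow_le_pow_right₀ hrq.le (le_max_left k m))
    have h2 : ‖(FormalMultilinearSeries.ofScalars ℂ c) n‖ * (q : ℝ) ^ n ≤ C := hb n
    rw [FormalMultilinearSeries.ofScalars_norm] at h2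
    have h3 : (r * q) ^ n ≤ ‖c n‖ * (q : ℝ) ^ n := by
      rw [mul_pow]
      exact mul_le_mul_of_nonneg_right (hlow n (le_max_right k m)) (by positivity)
    linarith
  calc ENNReal.ofReal r * Rc ≤ ENNReal.ofReal r * ENNReal.ofReal (1 / r) :=
        mul_le_mul_right hrad _
    _ = ENNReal.ofReal (r * (1 / r)) := (ENNReal.ofReal_mul hr.le).symm
    _ = 1 := by rw [mul_one_div, div_self hr.ne', ENNReal.ofReal_one]
end

section
/- Let m ∈ ℕ and let f(z) = ∑_{n≥m} a_n zⁿ be analytic on 𝔻 with ‖f‖_∞ ≤ 1. Then for every r ≥ 0 with r^{4m} + r² ≤ 1 one has r^m · ∑_{n≥m} |a_n| rⁿ ≤ 1. -/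
/-!
Restricting `f` to the circle of radius `s < 1` gives a continuous function on `AddCircle 1`
whose Fourier coefficients are `a_n sⁿ`, so Parseval's identity gives
`∑ |a_n|² s^{2n} ≤ ‖f‖²_∞ ≤ 1`; letting `s → 1` yields `∑ |a_n|² ≤ 1`. Since `a_n = 0` for
`n < m`, Cauchy–Schwarz against the geometric series then gives
`r^m ∑ |a_n| rⁿ = r^{2m} ∑_k |a_{k+m}| r^k ≤ r^{2m} / √(1 - r²)`,
which is at most `1` exactly when `r^{4m} + r² ≤ 1`.
-/

open Metric Filter Topology MeasureTheory AddCircle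

section Fourier

variable {T : ℝ} [Fact (0 < T)]

lemma fourierCoeff_eq_of_hasSum {ι : Type*} {e : ι → ℤ} (he : e.Injective) {c : ι → ℂ}
    {g : C(AddCircle T, ℂ)} (hg : HasSum (fun n => c n • fourier (e n)) g) (i : ι) :
    fourierCoeff g (e i) = c i := by
  classical
  let L : C(AddCircle T, ℂ) →L[ℂ] ℂ :=
    (innerSL ℂ (fourierLp 2 (e i))).comp (ContinuousMap.toLp 2 haarAddCircle ℂ)
  have hL : ∀ h, L h = fourierCoeff h (e i) := fun h => by
    rw [← fourierCoeff_toLp, ← fourierBasis_repr, HilbertBasis.repr_apply_apply, coe_fourierBasis]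
    rfl
  have hterm : ∀ n, L (c n • fourier (e n)) = if n = i then c i else 0 := fun n => by
    rw [map_smul, hL, fourierCoeff_fourier]
    by_cases h : n = i
    · simp [h]
    · simp [h, he.ne (Ne.symm h)]
  have := hg.mapL L
  simp only [hterm, hL] at this
  exact this.unique (hasSum_ite_eq i (c i))

lemma sum_sq_norm_fourierCoeff_le {g : C(AddCircle T, ℂ)} {M : ℝ} (hg : ∀ x, ‖g x‖ ≤ M)
    (F : Finset ℤ) : ∑ i ∈ F, ‖fourierCoeff g i‖ ^ 2 ≤ M ^ 2 := by
  have hparseval := hasSum_sq_fourierCoeff (ContinuousMap.toLp (E := ℂ) 2 haarAddCircle ℂ g)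
  simp_rw [fourierCoeff_toLp] at hparseval
  refine (sum_le_hasSum F (fun i _ => by positivity) hparseval).trans ?_
  calc ∫ t, ‖ContinuousMap.toLp (E := ℂ) 2 haarAddCircle ℂ g t‖ ^ 2 ∂haarAddCircle
      = ∫ t, ‖g t‖ ^ 2 ∂haarAddCircle := by
        refine integral_congr_ae ?_
        filter_upwards [ContinuousMap.coeFn_toLp (p := 2) (μ := haarAddCircle) (𝕜 := ℂ) g]
          with t ht
        rw [ht]
    _ ≤ ∫ _, M ^ 2 ∂haarAddCircle :=
        integral_mono_of_nonneg (.of_forall fun t => by positivity) (integrable_const _)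
          (.of_forall fun t => pow_le_pow_left₀ (norm_nonneg _) (hg t) 2)
    _ = M ^ 2 := by simp

end Fourier

section PowerSeries

lemma summable_norm_mul_pow_of_summable {𝕜 : Type*} [NormedField 𝕜] {A : ℕ → 𝕜} {t : 𝕜}
    (ht : Summable fun n => A n * t ^ n) {s : ℝ} (hs0 : 0 ≤ s) (hst : s < ‖t‖) :
    Summable fun n => ‖A n‖ * s ^ n := by
  obtain ⟨C, hC⟩ := ht.tendsto_atTop_zero.norm.bddAbove_range
  have ht0 : 0 < ‖t‖ := hs0.trans_lt hst
  have hgeom : Summable fun n => C * (s / ‖t‖) ^ n :=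
    (summable_geometric_of_lt_one (by positivity) ((div_lt_one ht0).2 hst)).mul_left C
  refine hgeom.of_nonneg_of_le (fun n => by positivity) fun n => ?_
  calc ‖A n‖ * s ^ n = ‖A n * t ^ n‖ * (s / ‖t‖) ^ n := by
        rw [norm_mul, norm_pow, div_pow, mul_assoc, mul_div_cancel₀ _ (by positivity)]
    _ ≤ C * (s / ‖t‖) ^ n := by gcongr; exact hC ⟨n, rfl⟩

variable {f : ℂ → ℂ} {A : ℕ → ℂ} {M : ℝ}

lemma sum_sq_norm_coeff_mul_pow_le
    (hrep : ∀ z ∈ ball (0 : ℂ) 1, HasSum (fun n => A n * z ^ n) (f z))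
    (hbd : ∀ z ∈ ball (0 : ℂ) 1, ‖f z‖ ≤ M) {s : ℝ} (hs0 : 0 ≤ s) (hs1 : s < 1) (F : Finset ℕ) :
    ∑ n ∈ F, (‖A n‖ * s ^ n) ^ 2 ≤ M ^ 2 := by
  have : Fact ((0 : ℝ) < 1) := ⟨one_pos⟩
  have hmem : ∀ x : AddCircle (1 : ℝ), (s : ℂ) * toCircle x ∈ ball (0 : ℂ) 1 := fun x => by
    simpa [abs_of_nonneg hs0, Circle.norm_coe] using hs1
  have ht : (((1 + s) / 2 : ℝ) : ℂ) ∈ ball (0 : ℂ) 1 := by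
    rw [mem_ball_zero_iff, Complex.norm_real, Real.norm_of_nonneg (by positivity)]
    linarith
  have habs : Summable fun n => ‖A n‖ * s ^ n :=
    summable_norm_mul_pow_of_summable (hrep _ ht).summable hs0 (by
      rw [Complex.norm_real, Real.norm_of_nonneg (by positivity)]; linarith)
  set c : ℕ → ℂ := fun n => A n * (s : ℂ) ^ n
  have hcnorm : ∀ n, ‖c n‖ = ‖A n‖ * s ^ n := fun n => by simp [c, abs_of_nonneg hs0]
  obtain ⟨g, hg⟩ : Summable fun n => c n • (fourier n : C(AddCircle (1 : ℝ), ℂ)) :=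
    .of_norm (by simpa [norm_smul, fourier_norm, hcnorm] using habs)
  have hg_apply : ∀ x, g x = f (s * toCircle x) := fun x => by
    refine ((ContinuousMap.evalCLM ℂ x).hasSum hg).unique ?_
    convert hrep _ (hmem x) using 2 with n
    simp only [ContinuousMap.evalCLM_apply, ContinuousMap.smul_apply, smul_eq_mul, c]
    rw [fourier_apply, natCast_zsmul, toCircle_nsmul, Circle.coe_pow]
    ring
  have hcoeff : ∀ n : ℕ, fourierCoeff g n = c n :=
    fourierCoeff_eq_of_hasSum Nat.cast_injective hg
  calc ∑ n ∈ F, (‖A n‖ * s ^ n) ^ 2 = ∑ n ∈ F, ‖fourierCoeff g n‖ ^ 2 := by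
        refine Finset.sum_congr rfl fun n _ => ?_
        rw [hcoeff, hcnorm]
    _ = ∑ i ∈ F.map Nat.castEmbedding, ‖fourierCoeff g i‖ ^ 2 := by
        rw [Finset.sum_map]; rfl
    _ ≤ M ^ 2 := sum_sq_norm_fourierCoeff_le (fun x => hg_apply x ▸ hbd _ (hmem x)) _

lemma sum_sq_norm_coeff_le
    (hrep : ∀ z ∈ ball (0 : ℂ) 1, HasSum (fun n => A n * z ^ n) (f z))
    (hbd : ∀ z ∈ ball (0 : ℂ) 1, ‖f z‖ ≤ M) (F : Finset ℕ) : ∑ n ∈ F, ‖A n‖ ^ 2 ≤ M ^ 2 := by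
  have hlim : Tendsto (fun s : ℝ => ∑ n ∈ F, (‖A n‖ * s ^ n) ^ 2) (𝓝[<] 1)
      (𝓝 (∑ n ∈ F, ‖A n‖ ^ 2)) := by
    have hcont : Continuous fun s : ℝ => ∑ n ∈ F, (‖A n‖ * s ^ n) ^ 2 := by fun_prop
    simpa using (hcont.tendsto 1).mono_left nhdsWithin_le_nhds
  refine le_of_tendsto hlim ?_
  filter_upwards [Ioo_mem_nhdsLT zero_lt_one] with s hs
  exact sum_sq_norm_coeff_mul_pow_le hrep hbd hs.1.le hs.2 F

end PowerSeries

lemma tsum_mul_pow_le_sqrt {a : ℕ → ℝ} {C r : ℝ} (ha : ∀ F : Finset ℕ, ∑ n ∈ F, a n ^ 2 ≤ C)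
    (hr0 : 0 ≤ r) (hr1 : r < 1) : ∑' n, a n * r ^ n ≤ √(C / (1 - r ^ 2)) := by
  have hgeom : HasSum (fun n => (r ^ n) ^ 2) (1 - r ^ 2)⁻¹ := by
    convert hasSum_geometric_of_lt_one (r := r ^ 2) (by positivity) (by nlinarith) using 1
    ext n
    ring
  refine tsum_le_of_sum_le' (Real.sqrt_nonneg _) fun F => ?_
  calc ∑ n ∈ F, a n * r ^ n ≤ √(∑ n ∈ F, a n ^ 2) * √(∑ n ∈ F, (r ^ n) ^ 2) :=
        Real.sum_mul_le_sqrt_mul_sqrt F a _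
    _ ≤ √C * √((1 - r ^ 2)⁻¹) := by
        gcongr
        · exact ha F
        · exact sum_le_hasSum F (fun n _ => by positivity) hgeom
    _ = √(C / (1 - r ^ 2)) := by
        rw [div_eq_mul_inv, Real.sqrt_mul' _ (inv_nonneg.2 (by nlinarith))]

lemma tsum_eq_tsum_add_of_eq_zero {M : Type*} [AddCommMonoid M] [TopologicalSpace M]
    {f : ℕ → M} {m : ℕ} (hf : ∀ n < m, f n = 0) : ∑' n, f n = ∑' k, f (k + m) :=
  ((add_left_injective m).tsum_eq fun n hn =>
    ⟨n - m, Nat.sub_add_cancel (not_lt.1 (mt (hf n) hn))⟩).symm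

theorem shifted_majorant_series_bound
    (m : ℕ) (f : ℂ → ℂ) (A : ℕ → ℂ)
    (hrep : ∀ z ∈ Metric.ball (0 : ℂ) 1, HasSum (fun n : ℕ => A n * z ^ n) (f z))
    (hvan : ∀ n, n < m → A n = 0)
    (hbd : ∀ z ∈ Metric.ball (0 : ℂ) 1, ‖f z‖ ≤ 1)
    (r : ℝ) (hr0 : 0 ≤ r) (hr : r ^ (4 * m) + r ^ 2 ≤ 1) :
    r ^ m * ∑' n : ℕ, ‖A n‖ * r ^ n ≤ 1 := by
  have hr1 : r < 1 := by
    by_contra! h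
    nlinarith [one_le_pow₀ (n := 4 * m) h]
  have hcoeff : ∀ F : Finset ℕ, ∑ k ∈ F, ‖A (k + m)‖ ^ 2 ≤ 1 := fun F => by
    simpa [Finset.sum_map] using sum_sq_norm_coeff_le hrep hbd (F.map (addRightEmbedding m))
  have hshift : ∑' n, ‖A n‖ * r ^ n = r ^ m * ∑' k, ‖A (k + m)‖ * r ^ k := by
    rw [tsum_eq_tsum_add_of_eq_zero fun n hn => by simp [hvan n hn], ← tsum_mul_left]
    congr 1 with k
    ring
  calc r ^ m * ∑' n, ‖A n‖ * r ^ n = r ^ (2 * m) * ∑' k, ‖A (k + m)‖ * r ^ k := by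
        rw [hshift]; ring
    _ ≤ r ^ (2 * m) * √(1 / (1 - r ^ 2)) := by
        gcongr
        exact tsum_mul_pow_le_sqrt hcoeff hr0 hr1
    _ = √(r ^ (4 * m) / (1 - r ^ 2)) := by
        rw [← Real.sqrt_sq (pow_nonneg hr0 (2 * m)), ← Real.sqrt_mul (sq_nonneg _)]
        ring_nf
    _ ≤ 1 := Real.sqrt_le_one.2 ((div_le_one (by nlinarith)).2 (by linarith))
end

section
/- For each m ∈ ℕ let R_m := sup { r ∈ [0, ∞) : for every function f(z) = ∑_{n≥m} a_n zⁿ analytic on 𝔻 satisfying |f(z)| ≤ |z|^m for all z ∈ 𝔻, and for every ρ ∈ [0, r], the series ∑_{n≥m} |a_n| ρⁿ converges and is ≤ 1 }. Then R_m → 1 as m → ∞. (This is the statement that the Bohr radius R_{S_{m,−m} → id} of the pair (shift operator S_{m,−m} f(z) = z^{−m} f(z), identity) tends to 1.) -/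
/-
Cauchy's estimate on circles of radius `r → 1` bounds every Taylor coefficient of a function
with `|f| ≤ 1` on the disk by `1`. If moreover `f` vanishes to order `m`, the majorant series
at `ρ < 1` is at most `ρ^m / (1 - ρ)`, which is `≤ 1` for all large `m`; so `R_m ≥ ρ`
eventually. Conversely `f(z) = z^(m+1)` shows that no `r > 1` is admissible, so `R_m ≤ 1`.
-/

open Metric Filter

/-- The set of admissible Bohr radii for the pair `(S_{m,-m}, id)`: nonnegative `r`
such that for every `f(z) = ∑_{n≥m} aₙ zⁿ` analytic on the unit disk with
`|f(z)| ≤ |z|^m` there, the majorant series at every `ρ ∈ [0,r]` converges and is `≤ 1`. -/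
def bohrSetShift (m : ℕ) : Set ℝ :=
  {r | 0 ≤ r ∧ ∀ (f : ℂ → ℂ) (A : ℕ → ℂ),
      (∀ z ∈ Metric.ball (0 : ℂ) 1, HasSum (fun n : ℕ => A n * z ^ n) (f z)) →
      (∀ n, n < m → A n = 0) →
      (∀ z ∈ Metric.ball (0 : ℂ) 1, ‖f z‖ ≤ ‖z‖ ^ m) →
      ∀ ρ : ℝ, 0 ≤ ρ → ρ ≤ r →
        Summable (fun n : ℕ => ‖A n‖ * ρ ^ n) ∧ ∑' n : ℕ, ‖A n‖ * ρ ^ n ≤ 1}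

open scoped NNReal

open FormalMultilinearSeries in
theorem hasFPowerSeriesOnBall_ofScalars_of_hasSum_s15 {f : ℂ → ℂ} {A : ℕ → ℂ} {R : ℝ≥0}
    (hR : 0 < R) (hsum : ∀ z ∈ ball (0 : ℂ) R, HasSum (fun n => A n * z ^ n) (f z)) :
    HasFPowerSeriesOnBall f (ofScalars ℂ A) 0 R where
  r_le := by
    refine ENNReal.le_of_forall_nnreal_lt fun r hr => (ofScalars ℂ A).le_radius_of_tendsto
      (l := 0) ?_
    have hr : ((r : ℝ) : ℂ) ∈ ball (0 : ℂ) R := by simpa using hr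
    simpa [ofScalars_norm] using (hsum _ hr).summable.tendsto_atTop_zero.norm
  r_pos := by simpa using hR
  hasSum {z} hz := by
    simpa [ofScalars_apply_eq, mul_comm] using hsum z (by simpa using hz)

theorem HasFPowerSeriesAt.ofScalars_eq_iteratedDeriv_div_factorial {𝕜 : Type*}
    [NontriviallyNormedField 𝕜] [CompleteSpace 𝕜] [CharZero 𝕜] {f : 𝕜 → 𝕜} {A : ℕ → 𝕜}
    {x : 𝕜} (hf : HasFPowerSeriesAt f (FormalMultilinearSeries.ofScalars 𝕜 A) x) (n : ℕ) :
    A n = iteratedDeriv n f x / n.factorial :=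
  congrFun (FormalMultilinearSeries.ofScalars_series_injective 𝕜 𝕜
    (hf.eq_formalMultilinearSeries hf.analyticAt.hasFPowerSeriesAt)) n

theorem HasFPowerSeriesOnBall.norm_ofScalars_mul_pow_le {f : ℂ → ℂ} {A : ℕ → ℂ} {R : ℝ≥0}
    {M : ℝ} (hf : HasFPowerSeriesOnBall f (FormalMultilinearSeries.ofScalars ℂ A) 0 R)
    (hM : ∀ z ∈ ball (0 : ℂ) R, ‖f z‖ ≤ M) (n : ℕ) :
    ‖A n‖ * R ^ n ≤ M := by
  have hdiff : DifferentiableOn ℂ f (ball 0 R) := by simpa using hf.differentiableOn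
  have hcauchy : ∀ r ∈ Set.Ioo (0 : ℝ) R, ‖A n‖ * r ^ n ≤ M := by
    rintro r ⟨hr₀, hrR⟩
    have hsub := closedBall_subset_ball (x := (0 : ℂ)) hrR
    have h := Complex.norm_iteratedDeriv_le_of_forall_mem_sphere_norm_le n hr₀
      (hdiff.diffContOnCl_ball hsub) fun z hz => hM z (hsub (sphere_subset_closedBall hz))
    calc ‖A n‖ * r ^ n = ‖iteratedDeriv n f 0‖ / n.factorial * r ^ n := by
          rw [hf.hasFPowerSeriesAt.ofScalars_eq_iteratedDeriv_div_factorial, norm_div,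
            Complex.norm_natCast]
      _ ≤ n.factorial * M / r ^ n / n.factorial * r ^ n := by gcongr
      _ = M := by field_simp
  have hR : (0 : ℝ) < R := by simpa using hf.r_pos
  exact le_of_tendsto ((continuous_const.mul (continuous_pow n)).tendsto' _ _ rfl |>.mono_left
    nhdsWithin_le_nhds) (eventually_of_mem (Ioo_mem_nhdsLT hR) hcauchy)

theorem norm_le_one_of_hasSum_of_norm_le_one {f : ℂ → ℂ} {A : ℕ → ℂ}
    (hsum : ∀ z ∈ ball (0 : ℂ) 1, HasSum (fun n => A n * z ^ n) (f z))
    (hf : ∀ z ∈ ball (0 : ℂ) 1, ‖f z‖ ≤ 1) (n : ℕ) : ‖A n‖ ≤ 1 := by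
  have hps := hasFPowerSeriesOnBall_ofScalars_of_hasSum_s15 (R := 1) one_pos (by simpa using hsum)
  simpa using hps.norm_ofScalars_mul_pow_le (by simpa using hf) n

section MajorantSeries

variable {E : Type*} [SeminormedAddCommGroup E] {A : ℕ → E} {ρ : ℝ}

theorem summable_norm_mul_pow_of_norm_le_one (hA : ∀ n, ‖A n‖ ≤ 1) (hρ₀ : 0 ≤ ρ)
    (hρ₁ : ρ < 1) : Summable fun n => ‖A n‖ * ρ ^ n :=
  (summable_geometric_of_lt_one hρ₀ hρ₁).of_nonneg_of_le (fun n => by positivity)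
    fun n => mul_le_of_le_one_left (by positivity) (hA n)

theorem tsum_norm_mul_pow_le_of_norm_le_one {m : ℕ} (hA : ∀ n, ‖A n‖ ≤ 1)
    (hvanish : ∀ n < m, A n = 0) (hρ₀ : 0 ≤ ρ) (hρ₁ : ρ < 1) :
    ∑' n, ‖A n‖ * ρ ^ n ≤ ρ ^ m / (1 - ρ) := by
  have hsum := summable_norm_mul_pow_of_norm_le_one hA hρ₀ hρ₁
  have hgeom := summable_geometric_of_lt_one hρ₀ hρ₁
  calc ∑' n, ‖A n‖ * ρ ^ n = ∑' n, ‖A (n + m)‖ * ρ ^ (n + m) := by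
        rw [← hsum.sum_add_tsum_nat_add m,
          Finset.sum_eq_zero fun n hn => by simp [hvanish n (Finset.mem_range.1 hn)], zero_add]
    _ ≤ ∑' n, ρ ^ m * ρ ^ n := by
        refine ((summable_nat_add_iff m).2 hsum).tsum_le_tsum (fun n => ?_) (hgeom.mul_left _)
        rw [pow_add, mul_comm (ρ ^ n)]
        exact mul_le_of_le_one_left (by positivity) (hA _)
    _ = ρ ^ m / (1 - ρ) := by
        rw [tsum_mul_left, tsum_geometric_of_lt_one hρ₀ hρ₁, div_eq_mul_inv]

end MajorantSeries

theorem mem_bohrSetShift_of_pow_le_one_sub {m : ℕ} {ρ : ℝ} (hρ₀ : 0 ≤ ρ)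
    (hm : ρ ^ m ≤ 1 - ρ) : ρ ∈ bohrSetShift m := by
  have hρ₁ : ρ < 1 := by
    by_contra! h
    linarith [one_le_pow₀ (n := m) h]
  refine ⟨hρ₀, fun f A hsum hvanish hf r hr₀ hrρ => ?_⟩
  have hA : ∀ n, ‖A n‖ ≤ 1 := norm_le_one_of_hasSum_of_norm_le_one hsum
    fun z hz => (hf z hz).trans (pow_le_one₀ (norm_nonneg z) (mem_ball_zero_iff.1 hz).le)
  have hr₁ : r < 1 := hrρ.trans_lt hρ₁
  refine ⟨summable_norm_mul_pow_of_norm_le_one hA hr₀ hr₁,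
    (tsum_norm_mul_pow_le_of_norm_le_one hA hvanish hr₀ hr₁).trans ?_⟩
  rw [div_le_one (by linarith)]
  linarith [pow_le_pow_left₀ hr₀ hrρ m]

theorem bohrSetShift_subset_Iic_one (m : ℕ) : bohrSetShift m ⊆ Set.Iic 1 := by
  rintro r ⟨hr₀, hr⟩
  -- the exponent `m + 1` rather than `m` makes `r ^ (m + 1) ≤ 1` informative also for `m = 0`
  let A : ℕ → ℂ := Pi.single (m + 1) 1
  have hterm (x : ℂ) : (fun n => A n * x ^ n) = Pi.single (m + 1) (x ^ (m + 1)) := by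
    ext n
    rcases eq_or_ne n (m + 1) with rfl | hn <;> simp [A, *]
  have hnorm : (fun n => ‖A n‖ * r ^ n) = Pi.single (m + 1) (r ^ (m + 1)) := by
    ext n
    rcases eq_or_ne n (m + 1) with rfl | hn <;> simp [A, *]
  have h := hr (fun z => z ^ (m + 1)) A (fun z _ => hterm z ▸ hasSum_pi_single _ _)
    (fun n hn => Pi.single_eq_of_ne (by omega) _)
    (fun z hz => by
      rw [norm_pow]
      exact pow_le_pow_of_le_one (norm_nonneg z) (mem_ball_zero_iff.1 hz).le m.le_succ)
    r hr₀ le_rfl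
  rw [hnorm, tsum_pi_single] at h
  exact (pow_le_one_iff_of_nonneg hr₀ m.succ_ne_zero).1 h.2

theorem bohr_radius_shift_operator_tendsto_one :
    Filter.Tendsto (fun m : ℕ => sSup (bohrSetShift m)) Filter.atTop (nhds 1) := by
  have hbdd (m : ℕ) : BddAbove (bohrSetShift m) := ⟨1, bohrSetShift_subset_Iic_one m⟩
  refine tendsto_order.2 ⟨fun a ha => ?_, fun a ha => Eventually.of_forall fun m => ?_⟩
  · obtain ⟨ρ, haρ, hρ₁⟩ := exists_between (max_lt ha one_pos)
    have hρ₀ : 0 ≤ ρ := (le_max_right a 0).trans haρ.le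
    filter_upwards [(tendsto_pow_atTop_nhds_zero_of_lt_one hρ₀ hρ₁).eventually_le_const
      (sub_pos.2 hρ₁)] with m hm
    exact (le_max_left a 0).trans_lt haρ |>.trans_le
      (le_csSup (hbdd m) (mem_bohrSetShift_of_pow_le_one_sub hρ₀ hm))
  · have h0 : (0 : ℝ) ∈ bohrSetShift m :=
      mem_bohrSetShift_of_pow_le_one_sub le_rfl (by simpa using pow_le_one₀ le_rfl zero_le_one)
    exact (csSup_le ⟨0, h0⟩ (bohrSetShift_subset_Iic_one m)).trans_lt ha
end

section
/- Let m ∈ ℕ and let c_n ∈ ℂ (n ≥ m) satisfy 0 < |c_m| and |c_n| ≤ |c_{n+1}| for all n ≥ m; let T denote the operator T f(z) := ∑_{n≥m} c_n a_n z^{n−m} for f(z) = ∑_{n≥m} a_n zⁿ. Let r ≥ 0 be such that for every F(z) = ∑_{n≥m} F_n zⁿ for which T F := ∑_{n≥m} c_n F_n z^{n−m} converges on 𝔻 and satisfies sup_{z∈𝔻} |T F(z)| ≤ 1, one has ∑_{n≥m} |F_n| ρⁿ ≤ 1 for all ρ ∈ [0, r]. Suppose f(z) = ∑_{n≥m} a_n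 zⁿ and g(z) = ∑_{n≥m} b_n zⁿ are such that T f and T g are analytic on 𝔻 and T f is subordinate to T g, i.e. there exists an analytic ω : 𝔻 → 𝔻 with ω(0) = 0 and T f(z) = (T g)(ω(z)) for all z ∈ 𝔻. Then ∑_{n≥m} |a_n| rⁿ ≤ ∑_{n≥m} |c_n b_n| r^{n−m}, i.e. M_r f ≤ M_r(T g). -/
/-!
By the Schwarz lemma `ω z = z * φ z` with `‖φ‖ ≤ 1` on the disk. Writing
`φ z ^ k = ∑ₗ Q k l * z ^ l` and expanding `T g (ω z) = ∑ₖ c (k+m) b (k+m) z ^ k φ z ^ k`,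
comparing coefficients of `T f = T g ∘ ω` gives
`c (n+m) a (n+m) = ∑_{k+l=n} c (k+m) b (k+m) Q k l`.
Each `φ ^ k` is `T F` for the `F` with coefficients `Q k l / c (l+m)`, so the Bohr hypothesis gives
`∑ₗ ‖Q k l‖ r ^ (l+m) / ‖c (l+m)‖ ≤ 1`. Since `‖c‖` is nondecreasing, dividing the coefficient
identity by `‖c (n+m)‖` costs at most dividing each term by `‖c (l+m)‖`, and summing over `n`
yields `M_r f ≤ ∑ₖ ‖c (k+m) b (k+m)‖ r ^ k`.
-/

open Metric
open scoped ENNReal NNReal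
open Finset

theorem HasSum.sum_antidiagonal {α : Type*} [AddCommMonoid α] [TopologicalSpace α]
    [ContinuousAdd α] [RegularSpace α] {f : ℕ × ℕ → α} {a : α} (h : HasSum f a) :
    HasSum (fun n => ∑ p ∈ antidiagonal n, f p) a := by
  rw [← HasAntidiagonal.sigmaAntidiagonalEquivProd.hasSum_iff] at h
  refine h.sigma fun n => ?_
  show HasSum (fun p : antidiagonal n => f p) _
  rw [← sum_coe_sort]
  exact hasSum_fintype _

theorem ENNReal.tsum_add_nat_of_eq_zero {f : ℕ → ℝ≥0∞} {m : ℕ} (hf : ∀ n < m, f n = 0) :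
    ∑' n, f (n + m) = ∑' n, f n := by
  rw [← (ENNReal.summable (f := fun n => f (n + m))).sum_add_tsum_nat_add',
    sum_eq_zero fun n hn => hf n (mem_range.1 hn), zero_add]

theorem tsum_le_tsum_of_le_sum_antidiagonal_mul {x u : ℕ → ℝ≥0∞} {v : ℕ → ℕ → ℝ≥0∞}
    (hx : ∀ n, x n ≤ ∑ p ∈ antidiagonal n, u p.1 * v p.1 p.2) (hv : ∀ k, ∑' l, v k l ≤ 1) :
    ∑' n, x n ≤ ∑' k, u k :=
  calc ∑' n, x n ≤ ∑' n, ∑ p ∈ antidiagonal n, u p.1 * v p.1 p.2 := ENNReal.tsum_le_tsum hx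
    _ = ∑' k, ∑' l, u k * v k l :=
      ENNReal.summable.hasSum.sum_antidiagonal.tsum_eq.trans
        (ENNReal.tsum_prod (f := fun k l => u k * v k l))
    _ = ∑' k, u k * ∑' l, v k l := by simp only [ENNReal.tsum_mul_left]
    _ ≤ ∑' k, u k * 1 := by gcongr with k; exact hv k
    _ = ∑' k, u k := by simp only [mul_one]

theorem mul_pow_le_sum_antidiagonal {γ : ℕ → ℝ} (hγ : Monotone γ) (hγ0 : ∀ n, 0 < γ n)
    {r : ℝ} (hr : 0 ≤ r) {β : ℕ → ℝ} {q : ℕ → ℕ → ℝ} (hβ : ∀ k, 0 ≤ β k)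
    (hq : ∀ k l, 0 ≤ q k l) {α : ℝ} (m n : ℕ)
    (h : γ n * α ≤ ∑ p ∈ antidiagonal n, β p.1 * q p.1 p.2) :
    α * r ^ (n + m) ≤
      ∑ p ∈ antidiagonal n, β p.1 * r ^ p.1 * (q p.1 p.2 / γ p.2 * r ^ (p.2 + m)) := by
  have hα : α ≤ ∑ p ∈ antidiagonal n, β p.1 * q p.1 p.2 / γ n := by
    rw [← sum_div, le_div_iff₀ (hγ0 n), mul_comm]
    exact h
  calc α * r ^ (n + m) ≤ (∑ p ∈ antidiagonal n, β p.1 * q p.1 p.2 / γ n) * r ^ (n + m) := by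
        gcongr
    _ ≤ ∑ p ∈ antidiagonal n, β p.1 * q p.1 p.2 / γ p.2 * r ^ (n + m) := by
        rw [sum_mul]
        refine sum_le_sum fun p hp => ?_
        have := mul_nonneg (hβ p.1) (hq p.1 p.2)
        gcongr
        · exact hγ0 _
        · exact hγ (by rw [← mem_antidiagonal.1 hp]; exact Nat.le_add_left _ _)
    _ = _ := by
        refine sum_congr rfl fun p hp => ?_
        rw [← mem_antidiagonal.1 hp, add_assoc, pow_add]
        ring

noncomputable def taylorCoeff (f : ℂ → ℂ) (n : ℕ) : ℂ := iteratedDeriv n f 0 / n.factorial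

theorem hasSum_taylorCoeff {f : ℂ → ℂ} {R : ℝ} (hf : DifferentiableOn ℂ f (ball 0 R)) {z : ℂ}
    (hz : z ∈ ball 0 R) : HasSum (fun n => taylorCoeff f n * z ^ n) (f z) := by
  refine (Complex.hasSum_taylorSeries_on_ball hf hz).congr_fun fun n => ?_
  rw [taylorCoeff, sub_zero, smul_eq_mul, smul_eq_mul]
  ring

theorem norm_taylorCoeff_le {f : ℂ → ℂ} {R ρ M : ℝ} (hf : DifferentiableOn ℂ f (ball 0 R))
    (hρ : 0 < ρ) (hρR : ρ < R) (hM : ∀ z ∈ ball 0 R, ‖f z‖ ≤ M) (n : ℕ) :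
    ‖taylorCoeff f n‖ ≤ M / ρ ^ n := by
  have hcauchy := Complex.norm_iteratedDeriv_le_of_forall_mem_sphere_norm_le n hρ
    (hf.diffContOnCl_ball (closedBall_subset_ball hρR))
    fun z hz => hM z (sphere_subset_closedBall.trans (closedBall_subset_ball hρR) hz)
  rw [taylorCoeff, norm_div, Complex.norm_natCast, div_le_iff₀ (by positivity)]
  calc ‖iteratedDeriv n f 0‖ ≤ n.factorial * M / ρ ^ n := hcauchy
    _ = M / ρ ^ n * n.factorial := by ring

theorem norm_dslope_le_one_of_mapsTo_ball {ω : ℂ → ℂ} (hω : DifferentiableOn ℂ ω (ball 0 1))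
    (hmaps : Set.MapsTo ω (ball 0 1) (ball 0 1)) (hω0 : ω 0 = 0) {z : ℂ} (hz : z ∈ ball 0 1) :
    ‖dslope ω 0 z‖ ≤ 1 := by
  rw [← div_one (1 : ℝ)]
  refine Complex.norm_dslope_le_div_of_mapsTo_ball hω ?_ hz
  rw [hω0]
  exact hmaps.mono_right ball_subset_closedBall

theorem hasFPowerSeriesAt_ofScalars_of_hasSum {f : ℂ → ℂ} {A : ℕ → ℂ} {s : ℝ} (hs : 0 < s)
    (hA : ∀ z ∈ ball 0 s, HasSum (fun n => A n * z ^ n) (f z)) :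
    HasFPowerSeriesAt f (FormalMultilinearSeries.ofScalars ℂ A) 0 := by
  lift s to ℝ≥0 using hs.le
  refine ⟨s, ?_, by exact_mod_cast hs, fun {y} hy => ?_⟩
  · refine ENNReal.le_of_forall_pos_nnreal_lt fun t _ ht => ?_
    have hmem : (t : ℂ) ∈ ball 0 s := by simpa using ht
    refine FormalMultilinearSeries.le_radius_of_tendsto _ (l := 0) ?_
    simpa [FormalMultilinearSeries.ofScalars_norm] using
      (hA _ hmem).summable.tendsto_atTop_zero.norm
  · rw [Metric.eball_coe] at hy
    rw [zero_add]
    simpa [FormalMultilinearSeries.ofScalars_apply_eq, mul_comm] using hA y hy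

theorem coeff_eq_of_hasSum_pow {f : ℂ → ℂ} {A B : ℕ → ℂ} {s : ℝ} (hs : 0 < s)
    (hA : ∀ z ∈ ball 0 s, HasSum (fun n => A n * z ^ n) (f z))
    (hB : ∀ z ∈ ball 0 s, HasSum (fun n => B n * z ^ n) (f z)) : A = B :=
  FormalMultilinearSeries.ofScalars_series_injective ℂ ℂ
    ((hasFPowerSeriesAt_ofScalars_of_hasSum hs hA).eq_formalMultilinearSeries
      (hasFPowerSeriesAt_ofScalars_of_hasSum hs hB))

theorem exists_norm_le_mul_pow_of_summable {B : ℕ → ℂ} {w : ℂ} (hw : w ≠ 0)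
    (h : Summable fun n => B n * w ^ n) : ∃ C, ∀ n, ‖B n‖ ≤ C * ‖w‖⁻¹ ^ n := by
  obtain ⟨C, hC⟩ := h.tendsto_atTop_zero.norm.bddAbove_range
  refine ⟨C, fun n => ?_⟩
  have hwn : 0 < ‖w‖ ^ n := pow_pos (norm_pos_iff.2 hw) n
  have : ‖B n‖ * ‖w‖ ^ n ≤ C := by simpa only [norm_mul, norm_pow] using hC ⟨n, rfl⟩
  rw [inv_pow, ← div_eq_mul_inv, le_div_iff₀ hwn]
  exact this

/-- The coefficients of `g` grow at most like `2 ^ k` (convergence at `1 / 2`), so for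
`‖z‖ < 1 / 8` the double series `∑ₖ ∑ₗ B k * Q k l * z ^ (k + l)` converges absolutely. -/
theorem hasSum_comp_mul_sum_antidiagonal {B : ℕ → ℂ} {g φ : ℂ → ℂ} {Q : ℕ → ℕ → ℂ}
    (hQ : ∀ k l, ‖Q k l‖ ≤ 2 ^ l)
    (hg : ∀ w ∈ ball 0 1, HasSum (fun k => B k * w ^ k) (g w))
    (hφ : ∀ k, ∀ z ∈ ball 0 1, HasSum (fun l => Q k l * z ^ l) (φ z ^ k))
    (hmaps : ∀ z ∈ ball 0 1, z * φ z ∈ ball 0 1) {z : ℂ} (hz : z ∈ ball 0 (1 / 8)) :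
    HasSum (fun n => (∑ p ∈ antidiagonal n, B p.1 * Q p.1 p.2) * z ^ n) (g (z * φ z)) := by
  have hz1 : z ∈ ball 0 1 := ball_subset_ball (by norm_num) hz
  have hz8 : ‖z‖ ≤ 1 / 8 := (mem_ball_zero_iff.1 hz).le
  obtain ⟨C, hB⟩ : ∃ C, ∀ k, ‖B k‖ ≤ C * 2 ^ k := by
    simpa using exists_norm_le_mul_pow_of_summable (w := 1 / 2) (by norm_num)
      (hg _ (by norm_num)).summable
  have hC : 0 ≤ C := by simpa using (norm_nonneg _).trans (hB 0)
  set e : ℕ × ℕ → ℂ := fun p => B p.1 * Q p.1 p.2 * z ^ (p.1 + p.2)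
  have hgeom : Summable fun n : ℕ => (1 / 4 : ℝ) ^ n :=
    summable_geometric_of_lt_one (by norm_num) (by norm_num)
  have he : Summable e := by
    refine Summable.of_norm_bounded ((hgeom.mul_left C).mul_of_nonneg hgeom
      (fun k => by positivity) fun l => by positivity) fun p => ?_
    calc ‖e p‖ = ‖B p.1‖ * ‖Q p.1 p.2‖ * ‖z‖ ^ (p.1 + p.2) := by
          simp only [e, norm_mul, norm_pow]
      _ ≤ C * 2 ^ p.1 * 2 ^ p.2 * (1 / 8) ^ (p.1 + p.2) := by
          gcongr
          exacts [hB _, hQ _ _]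
      _ = C * (1 / 4) ^ p.1 * (1 / 4) ^ p.2 := by
          rw [pow_add, show (1 / 4 : ℝ) = 2 * (1 / 8) by norm_num, mul_pow, mul_pow]
          ring
  have hfiber : ∀ k, HasSum (fun l => e (k, l)) (B k * (z * φ z) ^ k) := fun k => by
    rw [mul_pow, ← mul_assoc]
    refine ((hφ k z hz1).mul_left (B k * z ^ k)).congr_fun fun l => ?_
    simp only [e, pow_add]
    ring
  have hsum : HasSum e (g (z * φ z)) := by
    rw [← (he.hasSum.prod_fiberwise hfiber).unique (hg _ (hmaps z hz1))]
    exact he.hasSum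
  refine hsum.sum_antidiagonal.congr_fun fun n => ?_
  rw [sum_mul]
  refine sum_congr rfl fun p hp => ?_
  rw [← mem_antidiagonal.1 hp]

/-- `c (n + m) * F (n + m)` are the coefficients of `T F`. -/
def IsBohrRadius (m : ℕ) (c : ℕ → ℂ) (r : ℝ) : Prop :=
  ∀ (F : ℕ → ℂ) (G : ℂ → ℂ),
    (∀ n, n < m → F n = 0) →
    (∀ z ∈ Metric.ball (0 : ℂ) 1,
      HasSum (fun n : ℕ => c (n + m) * F (n + m) * z ^ n) (G z)) →
    (∀ z ∈ Metric.ball (0 : ℂ) 1, ‖G z‖ ≤ 1) →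
    ∀ ρ : ℝ, 0 ≤ ρ → ρ ≤ r →
      ∑' n : ℕ, ENNReal.ofReal (‖F n‖ * ρ ^ n) ≤ 1

theorem IsBohrRadius.tsum_le_one {m : ℕ} {c : ℕ → ℂ} {r : ℝ} (h : IsBohrRadius m c r)
    (hr : 0 ≤ r) (hc : ∀ n, c (n + m) ≠ 0) {Q : ℕ → ℂ} {G : ℂ → ℂ}
    (hG : ∀ z ∈ ball 0 1, HasSum (fun n => Q n * z ^ n) (G z))
    (hG1 : ∀ z ∈ ball 0 1, ‖G z‖ ≤ 1) :
    ∑' n, ENNReal.ofReal (‖Q n‖ / ‖c (n + m)‖ * r ^ (n + m)) ≤ 1 := by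
  set F : ℕ → ℂ := fun n => if n < m then 0 else Q (n - m) / c n
  have hF : ∀ n, F (n + m) = Q n / c (n + m) := fun n => by simp [F]
  have hbound := h F G (fun n hn => if_pos hn)
    (fun z hz => (hG z hz).congr_fun fun n => by rw [hF, mul_div_cancel₀ _ (hc n)]) hG1 r hr le_rfl
  rw [← ENNReal.tsum_add_nat_of_eq_zero (m := m) fun n hn => by simp [F, hn]] at hbound
  simpa only [hF, norm_div] using hbound

theorem majorant_le_of_mul_coeff_eq_sum_antidiagonal {m : ℕ} {c a B : ℕ → ℂ} {Q : ℕ → ℕ → ℂ} {r : ℝ}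
    (hr : 0 ≤ r) (hmono : Monotone fun n => ‖c (n + m)‖) (hc : ∀ n, 0 < ‖c (n + m)‖)
    (ha0 : ∀ n < m, a n = 0)
    (hcoeff : ∀ n, c (n + m) * a (n + m) = ∑ p ∈ antidiagonal n, B p.1 * Q p.1 p.2)
    (hQ : ∀ k, ∑' l, ENNReal.ofReal (‖Q k l‖ / ‖c (l + m)‖ * r ^ (l + m)) ≤ 1) :
    ∑' n, ENNReal.ofReal (‖a n‖ * r ^ n) ≤ ∑' k, ENNReal.ofReal (‖B k‖ * r ^ k) := by
  rw [← ENNReal.tsum_add_nat_of_eq_zero (m := m) fun n hn => by simp [ha0 n hn]]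
  refine tsum_le_tsum_of_le_sum_antidiagonal_mul (fun n => ?_) hQ
  have hn : ‖c (n + m)‖ * ‖a (n + m)‖ ≤ ∑ p ∈ antidiagonal n, ‖B p.1‖ * ‖Q p.1 p.2‖ := by
    rw [← norm_mul, hcoeff]
    exact (norm_sum_le _ _).trans_eq (sum_congr rfl fun p _ => norm_mul _ _)
  calc ENNReal.ofReal (‖a (n + m)‖ * r ^ (n + m))
      ≤ ENNReal.ofReal (∑ p ∈ antidiagonal n,
          ‖B p.1‖ * r ^ p.1 * (‖Q p.1 p.2‖ / ‖c (p.2 + m)‖ * r ^ (p.2 + m))) :=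
        ENNReal.ofReal_le_ofReal (mul_pow_le_sum_antidiagonal hmono hc hr
          (fun _ => norm_nonneg _) (fun _ _ => norm_nonneg _) m n hn)
    _ = _ := by
        rw [ENNReal.ofReal_sum_of_nonneg fun p _ => by positivity]
        exact sum_congr rfl fun p _ => ENNReal.ofReal_mul (by positivity)

theorem majorant_series_comparison_subordination_general
    (m : ℕ) (c : ℕ → ℂ) (hcm : 0 < ‖c m‖)
    (hmono : ∀ n, m ≤ n → ‖c n‖ ≤ ‖c (n + 1)‖)
    (r : ℝ) (hr0 : 0 ≤ r)
    (hbohr : ∀ (F : ℕ → ℂ) (G : ℂ → ℂ),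
      (∀ n, n < m → F n = 0) →
      (∀ z ∈ Metric.ball (0 : ℂ) 1,
        HasSum (fun n : ℕ => c (n + m) * F (n + m) * z ^ n) (G z)) →
      (∀ z ∈ Metric.ball (0 : ℂ) 1, ‖G z‖ ≤ 1) →
      ∀ ρ : ℝ, 0 ≤ ρ → ρ ≤ r →
        ∑' n : ℕ, ENNReal.ofReal (‖F n‖ * ρ ^ n) ≤ 1)
    (a b : ℕ → ℂ) (ha0 : ∀ n, n < m → a n = 0)
    (Tf Tg : ℂ → ℂ)
    (hTf : ∀ z ∈ Metric.ball (0 : ℂ) 1,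
      HasSum (fun n : ℕ => c (n + m) * a (n + m) * z ^ n) (Tf z))
    (hTg : ∀ z ∈ Metric.ball (0 : ℂ) 1,
      HasSum (fun n : ℕ => c (n + m) * b (n + m) * z ^ n) (Tg z))
    (ω : ℂ → ℂ) (hωa : AnalyticOnNhd ℂ ω (Metric.ball 0 1))
    (hωmap : ∀ z ∈ Metric.ball (0 : ℂ) 1, ω z ∈ Metric.ball (0 : ℂ) 1)
    (hω0 : ω 0 = 0)
    (hsub : ∀ z ∈ Metric.ball (0 : ℂ) 1, Tf z = Tg (ω z)) :
    ∑' n : ℕ, ENNReal.ofReal (‖a n‖ * r ^ n)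
      ≤ ∑' n : ℕ, ENNReal.ofReal (‖c (n + m) * b (n + m)‖ * r ^ n) := by
  have hcmono : Monotone fun n => ‖c (n + m)‖ := monotone_nat_of_le_succ fun n => by
    simpa only [Nat.add_right_comm n 1 m] using hmono (n + m) (Nat.le_add_left m n)
  have hc : ∀ n, 0 < ‖c (n + m)‖ := fun n =>
    hcm.trans_le (by simpa using hcmono (Nat.zero_le n))
  have hω : DifferentiableOn ℂ ω (ball 0 1) := hωa.differentiableOn
  set φ := dslope ω 0
  have hφ : DifferentiableOn ℂ φ (ball 0 1) :=
    (Complex.differentiableOn_dslope (ball_mem_nhds 0 one_pos)).2 hω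
  have hωφ : ∀ z, ω z = z * φ z := fun z => by
    simpa [hω0] using (sub_smul_dslope ω 0 z).symm
  have hφpow : ∀ k, ∀ z ∈ ball 0 1, ‖φ z ^ k‖ ≤ 1 := fun k z hz => by
    rw [norm_pow]
    exact pow_le_one₀ (norm_nonneg _) (norm_dslope_le_one_of_mapsTo_ball hω hωmap hω0 hz)
  set Q : ℕ → ℕ → ℂ := fun k => taylorCoeff (φ ^ k)
  have hQ : ∀ k, ∀ z ∈ ball 0 1, HasSum (fun l => Q k l * z ^ l) (φ z ^ k) := fun k _ hz =>
    hasSum_taylorCoeff (hφ.pow k) hz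
  have hQ2 : ∀ k l, ‖Q k l‖ ≤ 2 ^ l := fun k l => by
    simpa using norm_taylorCoeff_le (hφ.pow k) (ρ := 1 / 2) (by norm_num) (by norm_num)
      (hφpow k) l
  have hcoeff : ∀ n, c (n + m) * a (n + m) =
      ∑ p ∈ antidiagonal n, c (p.1 + m) * b (p.1 + m) * Q p.1 p.2 :=
    congrFun <| coeff_eq_of_hasSum_pow (s := 1 / 8) (by norm_num)
      (fun z hz => hTf z (ball_subset_ball (by norm_num) hz)) fun z hz => by
        rw [hsub z (ball_subset_ball (by norm_num) hz), hωφ]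
        exact hasSum_comp_mul_sum_antidiagonal hQ2 hTg hQ (fun z hz => hωφ z ▸ hωmap z hz) hz
  exact majorant_le_of_mul_coeff_eq_sum_antidiagonal hr0 hcmono hc ha0 hcoeff fun k =>
    IsBohrRadius.tsum_le_one hbohr hr0 (fun n => norm_pos_iff.1 (hc n)) (hQ k) (hφpow k)

theorem majorant_series_comparison_subordination
    (m : ℕ) (c : ℕ → ℂ) (hcm : 0 < ‖c m‖)
    (hmono : ∀ n, m ≤ n → ‖c n‖ ≤ ‖c (n + 1)‖)
    (r : ℝ) (hr0 : 0 ≤ r)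
    (hbohr : ∀ (F : ℕ → ℂ) (G : ℂ → ℂ),
      (∀ n, n < m → F n = 0) →
      (∀ z ∈ Metric.ball (0 : ℂ) 1,
        HasSum (fun n : ℕ => c (n + m) * F (n + m) * z ^ n) (G z)) →
      (∀ z ∈ Metric.ball (0 : ℂ) 1, ‖G z‖ ≤ 1) →
      ∀ ρ : ℝ, 0 ≤ ρ → ρ ≤ r →
        ∑' n : ℕ, ENNReal.ofReal (‖F n‖ * ρ ^ n) ≤ 1)
    (a b : ℕ → ℂ) (ha0 : ∀ n, n < m → a n = 0) (hb0 : ∀ n, n < m → b n = 0)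
    (Tf Tg : ℂ → ℂ)
    (hTf : ∀ z ∈ Metric.ball (0 : ℂ) 1,
      HasSum (fun n : ℕ => c (n + m) * a (n + m) * z ^ n) (Tf z))
    (hTg : ∀ z ∈ Metric.ball (0 : ℂ) 1,
      HasSum (fun n : ℕ => c (n + m) * b (n + m) * z ^ n) (Tg z))
    (ω : ℂ → ℂ) (hωa : AnalyticOnNhd ℂ ω (Metric.ball 0 1))
    (hωmap : ∀ z ∈ Metric.ball (0 : ℂ) 1, ω z ∈ Metric.ball (0 : ℂ) 1)
    (hω0 : ω 0 = 0)
    (hsub : ∀ z ∈ Metric.ball (0 : ℂ) 1, Tf z = Tg (ω z)) :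
    ∑' n : ℕ, ENNReal.ofReal (‖a n‖ * r ^ n)
      ≤ ∑' n : ℕ, ENNReal.ofReal (‖c (n + m) * b (n + m)‖ * r ^ n) :=
  majorant_series_comparison_subordination_general m c hcm hmono r hr0 hbohr a b ha0 Tf Tg hTf hTg ω
    hωa hωmap hω0 hsub
end
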